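/- arXiv:1201.1953 — 11 statements merged into one kernel-verified Lean document; each statement's English description precedes it below -/
import Mathlib

section
/- Let G be a dimension group with order unit u and let τ be a trace on G. If for all a, b in the interval [0,u] with τ(a) < τ(b) there exists c in [0,b] with τ(c) = τ(a), then τ is good, i.e., for all a, b in G⁺ with τ(a) < τ(b) there exists c in G⁺ with c ≤ b and τ(c) = τ(a). -/
/-!
Call `(a, b)` good if `τ a ≤ τ b` forces `τ a = τ c` for some `c ∈ [0, b]`. Goodness survives
splitting either entry into positive summands, provided the pieces are good against the relevant
intervals: to fill `b₁ + b₂` one first fills `b₂` and then `b₁` with what remains of `a`, and to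
fill `b` with `a₁ + a₂` one places `a₂` first and `a₁` in the remainder of `b`. Since `u` is an
order unit, Riesz decomposition splits every positive element into pieces from `[0, u]`, so two
inductions on the number of pieces reduce goodness of arbitrary pairs to pairs in `[0, u]`.
-/

namespace Paper

def RieszDecomp (G : Type*) [AddCommGroup G] [PartialOrder G] [IsOrderedAddMonoid G] : Prop :=
  ∀ a b c : G, 0 ≤ a → 0 ≤ b → 0 ≤ c → a ≤ b + c →
    ∃ b' c' : G, 0 ≤ b' ∧ b' ≤ b ∧ 0 ≤ c' ∧ c' ≤ c ∧ a = b' + c'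

def Unperf (G : Type*) [AddCommGroup G] [PartialOrder G] [IsOrderedAddMonoid G] : Prop :=
  ∀ (n : ℕ) (g : G), 0 < n → 0 ≤ n • g → 0 ≤ g

def DirectedGrp (G : Type*) [AddCommGroup G] [PartialOrder G] [IsOrderedAddMonoid G] : Prop :=
  ∀ a b : G, ∃ c : G, a ≤ c ∧ b ≤ c

/-- A dimension group: a directed, unperforated partially ordered abelian group
satisfying the Riesz decomposition property. -/
def DimGroup (G : Type*) [AddCommGroup G] [PartialOrder G] [IsOrderedAddMonoid G] : Prop :=
  DirectedGrp G ∧ RieszDecomp G ∧ Unperf G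

/-- A trace: a nonzero positive group homomorphism to `ℝ`. -/
def IsTrace {G : Type*} [AddCommGroup G] [PartialOrder G] [IsOrderedAddMonoid G] (τ : G →+ ℝ) : Prop :=
  (∀ g : G, 0 ≤ g → 0 ≤ τ g) ∧ τ ≠ 0

def IsOrderUnit {G : Type*} [AddCommGroup G] [PartialOrder G] [IsOrderedAddMonoid G] (u : G) : Prop :=
  0 ≤ u ∧ ∀ g : G, ∃ N : ℕ, -(N • u) ≤ g ∧ g ≤ N • u

/-- A good trace: for all nonzero positive `a`, `b` with `τ a < τ b` there is
`c ∈ [0, b]` with `τ c = τ a`. -/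
def GoodTrace {G : Type*} [AddCommGroup G] [PartialOrder G] [IsOrderedAddMonoid G] (τ : G →+ ℝ) : Prop :=
  ∀ a b : G, 0 ≤ a → 0 ≤ b → a ≠ 0 → b ≠ 0 → τ a < τ b →
    ∃ c : G, 0 ≤ c ∧ c ≤ b ∧ τ c = τ a

open Set

section

variable {G : Type*} [AddCommGroup G] [PartialOrder G]

def GoodPair (τ : G →+ ℝ) (a b : G) : Prop :=
  τ a ≤ τ b → τ a ∈ τ '' Icc 0 b

variable {τ : G →+ ℝ}

lemma goodPair_of_lt {a b : G} (hb : 0 ≤ b) (h : τ a < τ b → τ a ∈ τ '' Icc 0 b) :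
    GoodPair τ a b := by
  intro hab
  rcases hab.lt_or_eq with hlt | heq
  · exact h hlt
  · exact ⟨b, ⟨hb, le_rfl⟩, heq.symm⟩

variable [IsOrderedAddMonoid G]

lemma add_mem_image_Icc {b₁ b₂ : G} {x y : ℝ} (hx : x ∈ τ '' Icc 0 b₁)
    (hy : y ∈ τ '' Icc 0 b₂) : x + y ∈ τ '' Icc 0 (b₁ + b₂) := by
  obtain ⟨c₁, ⟨hc₁0, hc₁b⟩, rfl⟩ := hx
  obtain ⟨c₂, ⟨hc₂0, hc₂b⟩, rfl⟩ := hy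
  exact ⟨c₁ + c₂, ⟨add_nonneg hc₁0 hc₂0, add_le_add hc₁b hc₂b⟩, map_add τ c₁ c₂⟩

lemma goodPair_add_right {a b₁ b₂ : G} (hb₁ : 0 ≤ b₁) (hb₂ : 0 ≤ b₂)
    (h₂ : GoodPair τ a b₂) (h₂' : GoodPair τ b₂ a) (h₁ : ∀ a' ∈ Icc 0 a, GoodPair τ a' b₁) :
    GoodPair τ a (b₁ + b₂) := by
  intro hab
  rw [map_add] at hab
  rcases le_total (τ a) (τ b₂) with hle | hge
  · exact image_mono (Icc_subset_Icc_right (le_add_of_nonneg_left hb₁)) (h₂ hle)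
  · obtain ⟨d, ⟨hd0, hda⟩, hdτ⟩ := h₂' hge
    have hrest : τ (a - d) ≤ τ b₁ := by rw [map_sub, hdτ]; linarith
    have := add_mem_image_Icc (h₁ (a - d) ⟨sub_nonneg.2 hda, sub_le_self a hd0⟩ hrest)
      (mem_image_of_mem τ ⟨hb₂, le_rfl⟩)
    rwa [map_sub, hdτ, sub_add_cancel] at this

lemma goodPair_add_left (hτ : ∀ g : G, 0 ≤ g → 0 ≤ τ g) {a₁ a₂ b : G} (ha₁ : 0 ≤ a₁)
    (h₂ : GoodPair τ a₂ b) (h₁ : ∀ b' ∈ Icc 0 b, GoodPair τ a₁ b') :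
    GoodPair τ (a₁ + a₂) b := by
  intro hab
  rw [map_add] at hab ⊢
  obtain ⟨c₂, ⟨hc₂0, hc₂b⟩, hc₂τ⟩ := h₂ (by linarith [hτ a₁ ha₁])
  have hrest : τ a₁ ≤ τ (b - c₂) := by rw [map_sub, hc₂τ]; linarith
  have := add_mem_image_Icc (h₁ (b - c₂) ⟨sub_nonneg.2 hc₂b, sub_le_self b hc₂0⟩ hrest)
    (mem_image_of_mem τ ⟨hc₂0, le_rfl⟩)
  rwa [sub_add_cancel, hc₂τ] at this

variable {u : G}

lemma goodPair_of_mem_Icc_nsmul_right (hR : RieszDecomp G) (hu : 0 ≤ u)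
    (H : ∀ a ∈ Icc 0 u, ∀ b ∈ Icc 0 u, GoodPair τ a b) (N : ℕ) :
    ∀ b ∈ Icc 0 (N • u), ∀ a ∈ Icc 0 u, GoodPair τ a b := by
  induction N with
  | zero =>
    intro b hb a ha
    exact H a ha b ⟨hb.1, hb.2.trans (by simpa using hu)⟩
  | succ N ih =>
    intro b ⟨hb0, hbN⟩ a ha
    rw [succ_nsmul] at hbN
    obtain ⟨b₁, b₂, hb₁0, hb₁, hb₂0, hb₂, rfl⟩ := hR b _ _ hb0 (nsmul_nonneg hu N) hu hbN
    exact goodPair_add_right hb₁0 hb₂0 (H a ha b₂ ⟨hb₂0, hb₂⟩) (H b₂ ⟨hb₂0, hb₂⟩ a ha)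
      fun a' ha' => ih b₁ ⟨hb₁0, hb₁⟩ a' ⟨ha'.1, ha'.2.trans ha.2⟩

lemma goodPair_of_mem_Icc_nsmul_left (hR : RieszDecomp G) (hu : IsOrderUnit u)
    (hτ : ∀ g : G, 0 ≤ g → 0 ≤ τ g) (H : ∀ a ∈ Icc 0 u, ∀ b ∈ Icc 0 u, GoodPair τ a b)
    (M : ℕ) : ∀ a ∈ Icc 0 (M • u), ∀ b, 0 ≤ b → GoodPair τ a b := by
  have hunit : ∀ a ∈ Icc 0 u, ∀ b, 0 ≤ b → GoodPair τ a b := fun a ha b hb => by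
    obtain ⟨N, -, hbN⟩ := hu.2 b
    exact goodPair_of_mem_Icc_nsmul_right hR hu.1 H N b ⟨hb, hbN⟩ a ha
  induction M with
  | zero =>
    intro a ha
    exact hunit a ⟨ha.1, ha.2.trans (by simpa using hu.1)⟩
  | succ M ih =>
    intro a ⟨ha0, haM⟩ b hb
    rw [succ_nsmul] at haM
    obtain ⟨a₁, a₂, ha₁0, ha₁, ha₂0, ha₂, rfl⟩ := hR a _ _ ha0 (nsmul_nonneg hu.1 M) hu.1 haM
    exact goodPair_add_left hτ ha₁0 (hunit a₂ ⟨ha₂0, ha₂⟩ b hb)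
      fun b' hb' => ih a₁ ⟨ha₁0, ha₁⟩ b' hb'.1

lemma goodPair_of_nonneg (hR : RieszDecomp G) (hu : IsOrderUnit u)
    (hτ : ∀ g : G, 0 ≤ g → 0 ≤ τ g) (H : ∀ a ∈ Icc 0 u, ∀ b ∈ Icc 0 u, GoodPair τ a b)
    {a b : G} (ha : 0 ≤ a) (hb : 0 ≤ b) : GoodPair τ a b := by
  obtain ⟨M, -, haM⟩ := hu.2 a
  exact goodPair_of_mem_Icc_nsmul_left hR hu hτ H M a ⟨ha, haM⟩ b hb

end

theorem goodness_from_interval_condition {G : Type*} [AddCommGroup G] [PartialOrder G] [IsOrderedAddMonoid G]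
    (hG : DimGroup G) (u : G) (hu : IsOrderUnit u)
    (τ : G →+ ℝ) (hτ : IsTrace τ)
    (H : ∀ a b : G, 0 ≤ a → a ≤ u → 0 ≤ b → b ≤ u → τ a < τ b →
      ∃ c : G, 0 ≤ c ∧ c ≤ b ∧ τ c = τ a) :
    ∀ a b : G, 0 ≤ a → 0 ≤ b → τ a < τ b →
      ∃ c : G, 0 ≤ c ∧ c ≤ b ∧ τ c = τ a := by
  have hH : ∀ a ∈ Icc 0 u, ∀ b ∈ Icc 0 u, GoodPair τ a b := fun a ha b hb =>
    goodPair_of_lt hb.1 fun hab => by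
      obtain ⟨c, hc0, hcb, hc⟩ := H a b ha.1 ha.2 hb.1 hb.2 hab
      exact ⟨c, ⟨hc0, hcb⟩, hc⟩
  intro a b ha hb hab
  obtain ⟨c, ⟨hc0, hcb⟩, hc⟩ := goodPair_of_nonneg hG.2.1 hu hτ.1 hH ha hb hab.le
  exact ⟨c, hc0, hcb, hc⟩

end Paper
end

section
/- Let G be a dimension group and τ a good trace on G. Then for every b in G⁺, τ([0,b]) = τ(G) ∩ [0, τ(b)]; that is, for every a in G (not necessarily positive) with 0 ≤ τ(a) ≤ τ(b), there exists c in G⁺ with c ≤ b and τ(c) = τ(a). -/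
namespace Paper

namespace GoodTrace

variable {G : Type*} [AddCommGroup G] [PartialOrder G] [IsOrderedAddMonoid G] {τ : G →+ ℝ}

theorem exists_mem_Icc_eq_of_le (hgood : GoodTrace τ) (hpos : ∀ g : G, 0 ≤ g → 0 ≤ τ g)
    {a b : G} (ha : 0 ≤ a) (hb : 0 ≤ b) (hab : τ a ≤ τ b) :
    ∃ c : G, 0 ≤ c ∧ c ≤ b ∧ τ c = τ a := by
  obtain rfl | ha0 := eq_or_ne a 0
  · exact ⟨0, le_rfl, hb, rfl⟩
  obtain heq | hlt := hab.eq_or_lt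
  · exact ⟨b, hb, le_rfl, heq.symm⟩
  have hb0 : b ≠ 0 := by
    rintro rfl
    exact (hpos a ha).not_gt (by simpa using hlt)
  exact hgood a b ha hb ha0 hb0 hlt

/-- Choosing `e ≥ a, 0`, the element `e - c` with `c ∈ [0, e]`, `τ c = τ (e - a)` is positive
and has the same trace as `a`. -/
theorem exists_nonneg_eq (hgood : GoodTrace τ) (hpos : ∀ g : G, 0 ≤ g → 0 ≤ τ g)
    (hdir : DirectedGrp G) {a : G} (ha : 0 ≤ τ a) :
    ∃ a' : G, 0 ≤ a' ∧ τ a' = τ a := by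
  obtain ⟨e, hae, he⟩ := hdir a 0
  have hea : 0 ≤ e - a := sub_nonneg.mpr hae
  have hτea : τ (e - a) = τ e - τ a := map_sub τ e a
  have hle : τ (e - a) ≤ τ e := by linarith
  obtain ⟨c, -, hce, hc⟩ := hgood.exists_mem_Icc_eq_of_le hpos hea he hle
  exact ⟨e - c, sub_nonneg.mpr hce, by rw [map_sub, hc, hτea, sub_sub_cancel]⟩

end GoodTrace

theorem good_trace_interval_eq {G : Type*} [AddCommGroup G] [PartialOrder G] [IsOrderedAddMonoid G]
    (hG : DimGroup G) (τ : G →+ ℝ) (hτ : IsTrace τ) (hgood : GoodTrace τ) :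
    ∀ b : G, 0 ≤ b → ∀ a : G, 0 ≤ τ a → τ a ≤ τ b →
      ∃ c : G, 0 ≤ c ∧ c ≤ b ∧ τ c = τ a := by
  intro b hb a ha hab
  obtain ⟨a', ha', hτa'⟩ := hgood.exists_nonneg_eq hτ.1 hG.1 ha
  obtain ⟨c, hc, hcb, hτc⟩ := hgood.exists_mem_Icc_eq_of_le hτ.1 ha' hb (hτa' ▸ hab)
  exact ⟨c, hc, hcb, hτc.trans hτa'⟩

end Paper
end

section
/- Let G be a dimension group with a reasonable trace τ whose image τ(G) is dense in ℝ. If v₁ and v₂ are nonzero elements of G⁺ that are both τ-good, then v₁ + v₂ is τ-good. Consequently, if G⁺ admits a generating set consisting of τ-good elements, then τ is good. -/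
namespace Paper

/-- `v` is a `τ`-good element: `τ([0,v]) = τ(G) ∩ [0, τ v]` (nontrivial inclusion). -/
def TauGoodElem {G : Type*} [AddCommGroup G] [PartialOrder G] [IsOrderedAddMonoid G] (τ : G →+ ℝ) (v : G) : Prop :=
  ∀ a : G, 0 ≤ τ a → τ a ≤ τ v → ∃ c : G, 0 ≤ c ∧ c ≤ v ∧ τ c = τ a

section

variable {G : Type*} [AddCommGroup G] [PartialOrder G] [IsOrderedAddMonoid G] (τ : G →+ ℝ)

theorem tauGoodElem_zero : TauGoodElem τ 0 := fun a ha hav =>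
  ⟨0, le_rfl, le_rfl, by simpa using le_antisymm ha (by simpa using hav)⟩

variable {τ}

/-- Above `τ v₁`, the excess `τ a - τ v₁ = τ (a - v₁)` is again a value of `τ`, so `v₂` supplies
a witness for it. -/
theorem TauGoodElem.add {v₁ v₂ : G} (h₁ : 0 ≤ v₁) (h₂ : 0 ≤ v₂) (g₁ : TauGoodElem τ v₁)
    (g₂ : TauGoodElem τ v₂) : TauGoodElem τ (v₁ + v₂) := by
  intro a ha hav
  rw [map_add] at hav
  by_cases hlow : τ a ≤ τ v₁
  · obtain ⟨c, hc, hcv, hτc⟩ := g₁ a ha hlow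
    exact ⟨c, hc, hcv.trans (le_add_of_nonneg_right h₂), hτc⟩
  · obtain ⟨c, hc, hcv, hτc⟩ := g₂ (a - v₁) (by rw [map_sub]; linarith) (by rw [map_sub]; linarith)
    refine ⟨v₁ + c, add_nonneg h₁ hc, add_le_add_right hcv v₁, ?_⟩
    rw [map_add, hτc, map_sub, add_sub_cancel]

theorem tauGoodElem_multiset_sum {m : Multiset G} (hm : ∀ x ∈ m, 0 ≤ x ∧ TauGoodElem τ x) :
    TauGoodElem τ m.sum :=
  (Multiset.sum_induction (fun x => 0 ≤ x ∧ TauGoodElem τ x) m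
    (fun _ _ ha hb => ⟨add_nonneg ha.1 hb.1, ha.2.add ha.1 hb.1 hb.2⟩)
    ⟨le_rfl, tauGoodElem_zero τ⟩ hm).2

end

theorem sum_of_good_elements_good_general {G : Type*} [AddCommGroup G] [PartialOrder G] [IsOrderedAddMonoid G]
    (τ : G →+ ℝ) :
    (∀ v₁ v₂ : G, 0 ≤ v₁ → 0 ≤ v₂ → v₁ ≠ 0 → v₂ ≠ 0 →
      TauGoodElem τ v₁ → TauGoodElem τ v₂ → TauGoodElem τ (v₁ + v₂)) ∧
    (∀ H : Set G, (∀ h ∈ H, 0 ≤ h) →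
      (∀ g : G, 0 ≤ g → ∃ m : Multiset G, (∀ x ∈ m, x ∈ H) ∧ m.sum = g) →
      (∀ v ∈ H, TauGoodElem τ v) →
      ∀ b : G, 0 ≤ b → TauGoodElem τ b) := by
  refine ⟨fun v₁ v₂ h₁ h₂ _ _ g₁ g₂ => g₁.add h₁ h₂ g₂, ?_⟩
  intro H hHpos hgen hHgood b hb
  obtain ⟨m, hmH, rfl⟩ := hgen b hb
  exact tauGoodElem_multiset_sum fun x hx => ⟨hHpos x (hmH x hx), hHgood x (hmH x hx)⟩

theorem sum_of_good_elements_good {G : Type*} [AddCommGroup G] [PartialOrder G] [IsOrderedAddMonoid G]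
    (hG : DimGroup G) (τ : G →+ ℝ) (hτ : IsTrace τ)
    (hreason : ∀ b : G, 0 ≤ b → ∀ a : G, 0 ≤ τ a → τ a ≤ τ b → ∀ ε : ℝ, 0 < ε →
      ∃ c : G, 0 ≤ c ∧ c ≤ b ∧ |τ c - τ a| < ε)
    (hdense : Dense (Set.range (fun g : G => τ g))) :
    (∀ v₁ v₂ : G, 0 ≤ v₁ → 0 ≤ v₂ → v₁ ≠ 0 → v₂ ≠ 0 →
      TauGoodElem τ v₁ → TauGoodElem τ v₂ → TauGoodElem τ (v₁ + v₂)) ∧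
    (∀ H : Set G, (∀ h ∈ H, 0 ≤ h) →
      (∀ g : G, 0 ≤ g → ∃ m : Multiset G, (∀ x ∈ m, x ∈ H) ∧ m.sum = g) →
      (∀ v ∈ H, TauGoodElem τ v) →
      ∀ b : G, 0 ≤ b → TauGoodElem τ b) :=
  sum_of_good_elements_good_general τ

end Paper
end

section
/- Let G be a simple dimension group with Inf(G) = 0, having more than one trace, and let τ be a pure trace such that ker τ is cyclic (possibly zero). Then τ fails to be good. -/
/-!
If `ker τ = 0`, goodness turns `τ a < τ b` into `a ≤ b` for positive `a`, `b`; comparing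
`p • u` with `q • y` then pins every trace normalized at `u` to `τ`, so there cannot be two.

If `ker τ = ℤ g₀` with `g₀ ≠ 0`, then `Inf G = 0` gives a trace `σ` with `σ g₀ > 0` (up to
replacing `g₀` by `-g₀`). A level set of `τ` in `G⁺` is a coset of `ℤ g₀`, on which `σ` is bounded
below, so `σ` attains a least value `m` at some `x₁` of level `τ u`. Goodness lets one split off
elements of level `τ u` one at a time, so `σ ≥ N m` on the level `N τ u`. But `x₁` is an order
unit, hence `g₀ ≤ N • x₁`, and `N • x₁ - g₀` lies on that level with `σ`-value `N m - σ g₀ < N m`.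
-/

namespace Paper

lemma exists_nat_mul_lt_lt_nat_mul {x y : ℝ} (hx : 0 ≤ x) (hxy : x < y) :
    ∃ p q : ℕ, q * x < p ∧ (p : ℝ) < q * y := by
  obtain ⟨q, hq⟩ := exists_nat_gt (1 / (y - x))
  have hgap : 1 < q * (y - x) := by
    rw [div_lt_iff₀ (sub_pos.2 hxy)] at hq
    linarith
  refine ⟨⌊q * x⌋₊ + 1, q, by exact_mod_cast Nat.lt_floor_add_one _, ?_⟩
  have := Nat.floor_le (mul_nonneg q.cast_nonneg hx)
  push_cast
  linarith

section

variable {G : Type*} [AddCommGroup G] [PartialOrder G]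

lemma exists_isMinOn_level {τ σ : G →+ ℝ} (hσ : ∀ g, 0 ≤ g → 0 ≤ σ g) {g₀ : G}
    (hσg₀ : 0 < σ g₀) (hker : τ.ker = AddSubgroup.zmultiples g₀) {b : G} (hb : 0 ≤ b) :
    ∃ x ∈ {y | 0 ≤ y ∧ τ y = τ b}, IsMinOn σ {y | 0 ≤ y ∧ τ y = τ b} x := by
  have hbdd : ∃ l : ℤ, ∀ n : ℤ, 0 ≤ b + n • g₀ → l ≤ n := by
    refine ⟨⌈-σ b / σ g₀⌉, fun n hn => Int.ceil_le.2 ?_⟩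
    have := hσ _ hn
    rw [map_add, map_zsmul, zsmul_eq_mul] at this
    rw [div_le_iff₀ hσg₀]
    linarith
  obtain ⟨n₀, hn₀, hleast⟩ := Int.exists_least_of_bdd hbdd ⟨0, by simpa using hb⟩
  have hτg₀ : τ g₀ = 0 := AddMonoidHom.mem_ker.1 (hker ▸ AddSubgroup.mem_zmultiples g₀)
  refine ⟨b + n₀ • g₀, ⟨hn₀, by simp [hτg₀]⟩, fun y ⟨hy, hτy⟩ => ?_⟩
  obtain ⟨n, hn⟩ : y - b ∈ AddSubgroup.zmultiples g₀ := by
    rw [← hker, AddMonoidHom.mem_ker, map_sub, hτy, sub_self]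
  rw [eq_sub_iff_add_eq'] at hn
  have hn₀n : (n₀ : ℝ) ≤ n := by exact_mod_cast hleast n (hn ▸ hy)
  simp only [Set.mem_ofPred_eq, ← hn, map_add, map_zsmul, zsmul_eq_mul]
  nlinarith

variable [IsOrderedAddMonoid G]

lemma DirectedGrp.ext_of_nonneg (hdir : DirectedGrp G) {M : Type*} [AddCommGroup M]
    {f g : G →+ M} (h : ∀ x, 0 ≤ x → f x = g x) : f = g := by
  ext x
  obtain ⟨c, hxc, hc⟩ := hdir x 0
  have hcx : 0 ≤ c - x := sub_nonneg.2 hxc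
  calc f x = f c - f (c - x) := by rw [map_sub, sub_sub_cancel]
    _ = g c - g (c - x) := by rw [h c hc, h _ hcx]
    _ = g x := by rw [map_sub, sub_sub_cancel]

lemma eq_of_lt_imp_le (hdir : DirectedGrp G) {σ τ : G →+ ℝ}
    (hσ : ∀ g, 0 ≤ g → 0 ≤ σ g) (hτ : ∀ g, 0 ≤ g → 0 ≤ τ g) {u : G} (hu : 0 ≤ u)
    (hσu : σ u = 1) (hτu : τ u = 1)
    (hcmp : ∀ a b, 0 ≤ a → 0 ≤ b → τ a < τ b → σ a ≤ σ b) : σ = τ := by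
  refine hdir.ext_of_nonneg fun y hy => ?_
  have below : ∀ p q : ℕ, (p : ℝ) < q * τ y → (p : ℝ) ≤ q * σ y := fun p q h => by
    simpa [hσu] using hcmp (p • u) (q • y) (nsmul_nonneg hu p) (nsmul_nonneg hy q)
      (by simpa [hτu] using h)
  have above : ∀ p q : ℕ, q * τ y < p → q * σ y ≤ p := fun p q h => by
    simpa [hσu] using hcmp (q • y) (p • u) (nsmul_nonneg hy q) (nsmul_nonneg hu p)
      (by simpa [hτu] using h)
  rcases lt_trichotomy (σ y) (τ y) with hlt | heq | hgt
  · obtain ⟨p, q, h₁, h₂⟩ := exists_nat_mul_lt_lt_nat_mul (hσ y hy) hlt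
    exact absurd (below p q h₂) h₁.not_ge
  · exact heq
  · obtain ⟨p, q, h₁, h₂⟩ := exists_nat_mul_lt_lt_nat_mul (hτ y hy) hgt
    exact absurd (above p q h₁) h₂.not_ge

lemma GoodTrace.le_of_lt {τ : G →+ ℝ} (hgood : GoodTrace τ) (hinj : Function.Injective τ)
    (hτ : ∀ g, 0 ≤ g → 0 ≤ τ g) {a b : G} (ha : 0 ≤ a) (hb : 0 ≤ b) (hab : τ a < τ b) :
    a ≤ b := by
  rcases eq_or_ne a 0 with rfl | ha0
  · exact hb
  rcases eq_or_ne b 0 with rfl | hb0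
  · exact absurd (hτ a ha) (by simpa using hab)
  obtain ⟨c, -, hcb, hca⟩ := hgood a b ha hb ha0 hb0 hab
  exact hinj hca ▸ hcb

lemma GoodTrace.eq_of_injective (hdir : DirectedGrp G) {τ : G →+ ℝ} (hgood : GoodTrace τ)
    (hinj : Function.Injective τ) (hτ : ∀ g, 0 ≤ g → 0 ≤ τ g) {u : G} (hu : 0 ≤ u)
    (hτu : τ u = 1) {σ : G →+ ℝ} (hσ : ∀ g, 0 ≤ g → 0 ≤ σ g) (hσu : σ u = 1) : σ = τ :=
  eq_of_lt_imp_le hdir hσ hτ hu hσu hτu fun a b ha hb hab => by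
    simpa using hσ _ (sub_nonneg.2 (hgood.le_of_lt hinj hτ ha hb hab))

lemma GoodTrace.exists_le_of_le {τ : G →+ ℝ} (hgood : GoodTrace τ)
    (hτ : ∀ g, 0 ≤ g → 0 ≤ τ g) {a b : G} (ha : 0 ≤ a) (ha0 : a ≠ 0) (hb : 0 ≤ b)
    (hab : τ a ≤ τ b) : ∃ c, 0 ≤ c ∧ c ≤ b ∧ τ c = τ a := by
  rcases hab.lt_or_eq with hlt | heq
  · have hb0 : b ≠ 0 := by
      rintro rfl
      exact absurd (hτ a ha) (by simpa using hlt)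
    exact hgood a b ha hb ha0 hb0 hlt
  · exact ⟨b, hb, le_rfl, heq.symm⟩

lemma GoodTrace.nat_mul_le_of_forall_le {τ σ : G →+ ℝ} (hgood : GoodTrace τ)
    (hτ : ∀ g, 0 ≤ g → 0 ≤ τ g) (hσ : ∀ g, 0 ≤ g → 0 ≤ σ g) {u : G} (hu : 0 ≤ u)
    (hu0 : u ≠ 0) {m : ℝ} (hmin : ∀ c, 0 ≤ c → τ c = τ u → m ≤ σ c) :
    ∀ (N : ℕ) (y : G), 0 ≤ y → τ y = N * τ u → N * m ≤ σ y := by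
  intro N
  induction N with
  | zero => exact fun y hy _ => by simpa using hσ y hy
  | succ N ih =>
    intro y hy hτy
    have hle : τ u ≤ τ y := by
      rw [hτy]
      push_cast
      nlinarith [hτ u hu, (N.cast_nonneg : (0 : ℝ) ≤ N)]
    obtain ⟨c, hc, hcy, hτc⟩ := hgood.exists_le_of_le hτ hu hu0 hy hle
    have hrest := ih (y - c) (sub_nonneg.2 hcy) (by rw [map_sub, hτy, hτc]; push_cast; ring)
    have hfirst := hmin c hc hτc
    rw [map_sub] at hrest
    push_cast
    linarith

lemma not_goodTrace_of_ker_eq_zmultiples_of_pos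
    (hsimple : ∀ g : G, 0 ≤ g → g ≠ 0 → IsOrderUnit g) {τ σ : G →+ ℝ}
    (hτ : ∀ g, 0 ≤ g → 0 ≤ τ g) {u : G} (hu : 0 ≤ u) (hτu : τ u ≠ 0)
    (hσ : ∀ g, 0 ≤ g → 0 ≤ σ g) {g₀ : G} (hσg₀ : 0 < σ g₀)
    (hker : τ.ker = AddSubgroup.zmultiples g₀) : ¬ GoodTrace τ := by
  intro hgood
  obtain ⟨x₁, ⟨hx₁, hτx₁⟩, hmin⟩ := exists_isMinOn_level hσ hσg₀ hker hu
  have hx₁0 : x₁ ≠ 0 := by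
    rintro rfl
    exact hτu (by simpa using hτx₁.symm)
  obtain ⟨N, -, hg₀N⟩ := (hsimple x₁ hx₁ hx₁0).2 g₀
  have hτg₀ : τ g₀ = 0 := AddMonoidHom.mem_ker.1 (hker ▸ AddSubgroup.mem_zmultiples g₀)
  have hlinear := hgood.nat_mul_le_of_forall_le hτ hσ hu (fun h => hτu (by simp [h]))
    (fun c hc hτc => hmin ⟨hc, hτc⟩) N (N • x₁ - g₀) (sub_nonneg.2 hg₀N)
    (by simp [hτg₀, hτx₁])
  simp only [map_sub, map_nsmul, nsmul_eq_mul] at hlinear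
  linarith

lemma not_goodTrace_of_ker_eq_zmultiples
    (hsimple : ∀ g : G, 0 ≤ g → g ≠ 0 → IsOrderUnit g) {τ σ : G →+ ℝ}
    (hτ : ∀ g, 0 ≤ g → 0 ≤ τ g) {u : G} (hu : 0 ≤ u) (hτu : τ u ≠ 0)
    (hσ : ∀ g, 0 ≤ g → 0 ≤ σ g) {g₀ : G} (hσg₀ : σ g₀ ≠ 0)
    (hker : τ.ker = AddSubgroup.zmultiples g₀) : ¬ GoodTrace τ := by
  rcases hσg₀.lt_or_gt with hneg | hpos
  · exact not_goodTrace_of_ker_eq_zmultiples_of_pos hsimple hτ hu hτu hσ (g₀ := -g₀)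
      (by simpa using hneg) (by rw [AddSubgroup.zmultiples_neg, hker])
  · exact not_goodTrace_of_ker_eq_zmultiples_of_pos hsimple hτ hu hτu hσ hpos hker

end

theorem cyclic_kernel_pure_trace_not_good_general {G : Type*} [AddCommGroup G] [PartialOrder G] [IsOrderedAddMonoid G]
    (hG : DimGroup G)
    (hsimple : ∀ g : G, 0 ≤ g → g ≠ 0 → IsOrderUnit g)
    (hinf : ∀ g : G, (∀ σ : G →+ ℝ, IsTrace σ → σ g = 0) → g = 0)
    (u : G) (hu : IsOrderUnit u)
    (hmany : ∃ σ₁ σ₂ : G →+ ℝ, IsTrace σ₁ ∧ σ₁ u = 1 ∧ IsTrace σ₂ ∧ σ₂ u = 1 ∧ σ₁ ≠ σ₂)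
    (τ : G →+ ℝ) (hτ : IsTrace τ) (hτu : τ u = 1)
    (hcyc : ∃ g₀ : G, ∀ g : G, τ g = 0 ↔ ∃ n : ℤ, g = n • g₀) :
    ¬ GoodTrace τ := by
  intro hgood
  obtain ⟨g₀, hg₀⟩ := hcyc
  have hker : τ.ker = AddSubgroup.zmultiples g₀ := by
    ext g
    simp [AddSubgroup.mem_zmultiples_iff, hg₀, eq_comm]
  rcases eq_or_ne g₀ 0 with rfl | hg₀0
  · obtain ⟨σ₁, σ₂, hσ₁, hσ₁u, hσ₂, hσ₂u, hne⟩ := hmany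
    have hinj : Function.Injective τ := by
      rw [← AddMonoidHom.ker_eq_bot_iff, hker, AddSubgroup.zmultiples_zero_eq_bot]
    exact hne <| (hgood.eq_of_injective hG.1 hinj hτ.1 hu.1 hτu hσ₁.1 hσ₁u).trans
      (hgood.eq_of_injective hG.1 hinj hτ.1 hu.1 hτu hσ₂.1 hσ₂u).symm
  · obtain ⟨σ, hσ, hσg₀⟩ : ∃ σ, IsTrace σ ∧ σ g₀ ≠ 0 := by
      by_contra! h
      exact hg₀0 (hinf g₀ h)
    exact not_goodTrace_of_ker_eq_zmultiples hsimple hτ.1 hu.1 (by simp [hτu]) hσ.1 hσg₀ hker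
      hgood

theorem cyclic_kernel_pure_trace_not_good {G : Type*} [AddCommGroup G] [PartialOrder G] [IsOrderedAddMonoid G]
    (hG : DimGroup G)
    (hsimple : ∀ g : G, 0 ≤ g → g ≠ 0 → IsOrderUnit g)
    (hinf : ∀ g : G, (∀ σ : G →+ ℝ, IsTrace σ → σ g = 0) → g = 0)
    (u : G) (hu : IsOrderUnit u)
    (hmany : ∃ σ₁ σ₂ : G →+ ℝ, IsTrace σ₁ ∧ σ₁ u = 1 ∧ IsTrace σ₂ ∧ σ₂ u = 1 ∧ σ₁ ≠ σ₂)
    (τ : G →+ ℝ) (hτ : IsTrace τ) (hτu : τ u = 1)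
    (hpure : ∀ σ₁ σ₂ : G →+ ℝ, IsTrace σ₁ → σ₁ u = 1 → IsTrace σ₂ → σ₂ u = 1 →
      ∀ t : ℝ, 0 < t → t < 1 → (∀ g : G, τ g = t * σ₁ g + (1 - t) * σ₂ g) → σ₁ = τ)
    (hcyc : ∃ g₀ : G, ∀ g : G, τ g = 0 ↔ ∃ n : ℤ, g = n • g₀) :
    ¬ GoodTrace τ :=
  cyclic_kernel_pure_trace_not_good_general hG hsimple hinf u hu hmany τ hτ hτu hcyc

end Paper
end

section
/- Let G be the subgroup of ℝ² generated by (1,0), (0,1), and (α,β), where {1, α, β} is linearly independent over ℚ and 0 < α < 1 < β, equipped with the strict ordering (nonzero g ∈ G⁺ iff both coordinates of g are strictly positive). Let τ be projection onto the second coordinate. Then there is no c ∈ G⁺ with c ≤ (α,β) and τ(c) = 1; in particular τ is not a good trace. -/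
/-!
The second coordinate of an element of `G` is `n + pβ` with `n, p ∈ ℤ`; since `β` is irrational
it can equal `1` only for `p = 0`, `n = 1`. So a positive `c` with `τ(c) = 1` is `(m, 1)` with
`m ≥ 1 > α`, and `(α, β) - c` has negative first coordinate. Hence `a = (1, 1)`, `b = (α, β)`
violate goodness of `τ`.
-/

namespace Paper

/-- The positive cone of the strict ordering on a dense subgroup of `ℝ²`:
zero, or both coordinates strictly positive. -/
def StrictPos (p : ℝ × ℝ) : Prop := p = 0 ∨ (0 < p.1 ∧ 0 < p.2)

/-- The subgroup of `ℝ²` generated by `(1,0)`, `(0,1)`, `(α,β)`. -/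
def genGrp (α β : ℝ) : AddSubgroup (ℝ × ℝ) :=
  AddSubgroup.closure {((1 : ℝ), (0 : ℝ)), ((0 : ℝ), (1 : ℝ)), (α, β)}

theorem _root_.AddSubgroup.mem_closure_triple {A : Type*} [AddCommGroup A] {x y z w : A} :
    w ∈ AddSubgroup.closure ({x, y, z} : Set A) ↔ ∃ l m n : ℤ, l • x + m • y + n • z = w := by
  rw [← Set.singleton_union, AddSubgroup.closure_union, AddSubgroup.mem_sup]
  simp_rw [AddSubgroup.mem_closure_singleton, AddSubgroup.mem_closure_pair]
  constructor
  · rintro ⟨_, ⟨l, rfl⟩, _, ⟨m, n, rfl⟩, rfl⟩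
    exact ⟨l, m, n, add_assoc _ _ _⟩
  · rintro ⟨l, m, n, rfl⟩
    exact ⟨_, ⟨l, rfl⟩, _, ⟨m, n, rfl⟩, (add_assoc _ _ _).symm⟩

theorem _root_.LinearIndependent.irrational {ι : Type*} {v : ι → ℝ} (hv : LinearIndependent ℚ v)
    {i j : ι} (hij : i ≠ j) (hi : v i = 1) : Irrational (v j) := by
  rintro ⟨q, hq⟩
  refine (linearIndepOn_pair_iff v hij (by simp [hi])).mp (hv.linearIndepOn _) q ?_
  simp [hi, hq, Rat.smul_def]

theorem StrictPos.fst_nonneg {p : ℝ × ℝ} (hp : StrictPos p) : 0 ≤ p.1 := by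
  rcases hp with rfl | ⟨h, -⟩
  exacts [le_rfl, h.le]

theorem one_one_mem_genGrp (α β : ℝ) : ((1 : ℝ), (1 : ℝ)) ∈ genGrp α β :=
  AddSubgroup.mem_closure_triple.mpr ⟨1, 1, 0, by simp⟩

theorem mem_genGrp_self (α β : ℝ) : ((α, β) : ℝ × ℝ) ∈ genGrp α β :=
  AddSubgroup.subset_closure (by simp)

theorem exists_eq_intCast_of_mem_genGrp_of_snd_eq_one {α β : ℝ} (hβ : Irrational β) {c : ℝ × ℝ}
    (hc : c ∈ genGrp α β) (hc2 : c.2 = 1) : ∃ m : ℤ, c = ((m : ℝ), 1) := by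
  obtain ⟨l, m, n, rfl⟩ := AddSubgroup.mem_closure_triple.mp hc
  simp only [Prod.smul_mk, zsmul_eq_mul, mul_one, smul_zero, Prod.mk_add_mk, add_zero,
    zero_add] at hc2
  obtain rfl : n = 0 := by
    by_contra hn
    exact ((hβ.intCast_mul hn).intCast_add m).ne_one hc2
  obtain rfl : m = 1 := by simpa using hc2
  exact ⟨l, by simp⟩

theorem not_exists_strictPos_le_of_snd_eq_one {α β : ℝ} (hβ : Irrational β) (hα : α < 1) :
    ¬ ∃ c : ℝ × ℝ, c ∈ genGrp α β ∧ StrictPos c ∧ StrictPos ((α, β) - c) ∧ c.2 = 1 := by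
  rintro ⟨c, hc, hpos, hle, hc2⟩
  obtain ⟨m, rfl⟩ := exists_eq_intCast_of_mem_genGrp_of_snd_eq_one hβ hc hc2
  have hm : (0 : ℤ) < m := Int.cast_pos.mp (hpos.resolve_left (by simp [Prod.ext_iff])).1
  have hfst : 0 ≤ α - m := hle.fst_nonneg
  have : (1 : ℝ) ≤ m := Int.cast_one_le_of_pos hm
  linarith

theorem second_coordinate_not_good (α β : ℝ)
    (hli : LinearIndependent ℚ ![(1 : ℝ), α, β])
    (hα0 : 0 < α) (hα1 : α < 1) (hβ : 1 < β) :
    (¬ ∃ c : ℝ × ℝ, c ∈ genGrp α β ∧ StrictPos c ∧ StrictPos ((α, β) - c) ∧ c.2 = 1) ∧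
    ¬ (∀ a b : ℝ × ℝ, a ∈ genGrp α β → b ∈ genGrp α β →
        StrictPos a → StrictPos b → a ≠ 0 → b ≠ 0 → a.2 < b.2 →
        ∃ c : ℝ × ℝ, c ∈ genGrp α β ∧ StrictPos c ∧ StrictPos (b - c) ∧ c.2 = a.2) := by
  have hβirr : Irrational β := hli.irrational (i := 0) (j := 2) (by decide) rfl
  have key := not_exists_strictPos_le_of_snd_eq_one hβirr hα1
  refine ⟨key, fun hgood => key <|
    hgood (1, 1) (α, β) (one_one_mem_genGrp α β) (mem_genGrp_self α β)
      (Or.inr ⟨one_pos, one_pos⟩) (Or.inr ⟨hα0, by linarith⟩)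
      (by simp [Prod.ext_iff]) (by simp [Prod.ext_iff, hα0.ne']) hβ⟩

end Paper
end

section
/- Let G be the subgroup of ℝ² generated by v₁ = (1,1), v₂ = (α₁,β₁), v₃ = (α₂,β₂), where {1,β₁,β₂} and {β₁−α₁, β₂−α₂, α₁β₂−β₁α₂} are each linearly independent over ℚ, with αᵢ < βᵢ and α₁+α₂ < 1 < β₁+β₂, equipped with the strict ordering. Then the second-coordinate projection τ has ker τ = {0}, and for no order unit u of G is τ group-like with respect to u. -/
/-!
Since `1, β₁, β₂` are rationally independent, the second projection `τ` is injective on `G`.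
If `τ` were group-like with respect to an order unit `u`, injectivity would force every
`a ∈ G` with `0 ≤ τ a ≤ τ u` to lie in `[0, u]`, hence to be positive; writing an arbitrary
`g` with `τ g ≥ 0` as `g = (g - k u) + k u` with `k = ⌊τ g / τ u⌋` then makes the positive cone
all of `{τ ≥ 0}`. This fails because `α₁ < β₁`: some `d v₂ - m v₁` has `τ > 0` but first
coordinate `≤ 0`.
-/

namespace Paper

/-- The subgroup of `ℝ²` generated by `(1,1)`, `(α₁,β₁)`, `(α₂,β₂)`. -/
def genGrp2 (α₁ β₁ α₂ β₂ : ℝ) : AddSubgroup (ℝ × ℝ) :=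
  AddSubgroup.closure {((1 : ℝ), (1 : ℝ)), (α₁, β₁), (α₂, β₂)}

theorem StrictPos.add {p q : ℝ × ℝ} (hp : StrictPos p) (hq : StrictPos q) :
    StrictPos (p + q) := by
  rcases hp with rfl | ⟨hp1, hp2⟩
  · simpa using hq
  rcases hq with rfl | ⟨hq1, hq2⟩
  · rw [add_zero]; exact Or.inr ⟨hp1, hp2⟩
  exact Or.inr ⟨add_pos hp1 hq1, add_pos hp2 hq2⟩

theorem StrictPos.nsmul {p : ℝ × ℝ} (hp : StrictPos p) (n : ℕ) : StrictPos (n • p) := by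
  induction n with
  | zero => exact Or.inl (zero_smul ℕ p)
  | succ n ih => rw [succ_nsmul]; exact ih.add hp

theorem StrictPos.eq_zero_of_neg {p : ℝ × ℝ} (hp : StrictPos p) (hn : StrictPos (-p)) :
    p = 0 := by
  rcases hp with h | ⟨hp1, -⟩
  · exact h
  rcases hn with h | ⟨hn1, -⟩
  · exact neg_eq_zero.mp h
  · simp only [Prod.fst_neg, neg_pos] at hn1
    exact absurd hp1 hn1.not_gt

/-- `τ(H) ∩ [0, τ u] ⊆ τ([0, u])` for the second projection `τ`; the reverse inclusion always
holds, so this says that `τ` is group-like with respect to `u`. -/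
def SndIsGroupLike (H : AddSubgroup (ℝ × ℝ)) (u : ℝ × ℝ) : Prop :=
  ∀ a ∈ H, 0 ≤ a.2 → a.2 ≤ u.2 → ∃ b ∈ H, StrictPos b ∧ StrictPos (u - b) ∧ b.2 = a.2

section

variable {H : AddSubgroup (ℝ × ℝ)} {u : ℝ × ℝ}

theorem strictPos_of_sndIsGroupLike (hker : ∀ g ∈ H, g.2 = 0 → g = 0)
    (hGL : SndIsGroupLike H u) {a : ℝ × ℝ} (ha : a ∈ H) (ha0 : 0 ≤ a.2) (hau : a.2 ≤ u.2) :
    StrictPos a := by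
  obtain ⟨b, hb, hbpos, -, hba⟩ := hGL a ha ha0 hau
  have hba' : b - a = 0 := hker _ (sub_mem hb ha) (by simp [hba])
  rwa [sub_eq_zero.mp hba'] at hbpos

theorem strictPos_of_snd_nonneg (hu : u ∈ H) (hu2 : 0 < u.2)
    (hsmall : ∀ a ∈ H, 0 ≤ a.2 → a.2 ≤ u.2 → StrictPos a) {g : ℝ × ℝ} (hg : g ∈ H)
    (hg2 : 0 ≤ g.2) : StrictPos g := by
  set k := ⌊g.2 / u.2⌋₊
  have hk_le : k * u.2 ≤ g.2 := (le_div_iff₀ hu2).mp (Nat.floor_le (div_nonneg hg2 hu2.le))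
  have hk_lt : g.2 < (k + 1) * u.2 := (div_lt_iff₀ hu2).mp (Nat.lt_floor_add_one _)
  have hrem : StrictPos (g - k • u) :=
    hsmall _ (sub_mem hg (nsmul_mem hu k)) (by simp; linarith) (by simp; linarith)
  simpa using hrem.add ((hsmall u hu hu2.le le_rfl).nsmul k)

end

open Set Submodule in
theorem eq_zero_of_mem_genGrp2_of_snd_eq_zero {α₁ β₁ α₂ β₂ : ℝ}
    (h : LinearIndependent ℚ ![(1 : ℝ), β₁, β₂]) {g : ℝ × ℝ} (hg : g ∈ genGrp2 α₁ β₁ α₂ β₂)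
    (hg2 : g.2 = 0) : g = 0 := by
  set v : Fin 3 → ℝ × ℝ := ![(1, 1), (α₁, β₁), (α₂, β₂)]
  have hv : LinearIndependent ℤ (LinearMap.snd ℤ ℝ ℝ ∘ v) := by
    convert h.restrict_scalars' ℤ using 1
    ext i; fin_cases i <;> rfl
  have hspan : g ∈ span ℤ (range v) := by
    rw [← mem_toAddSubgroup, span_int_eq_addSubgroupClosure]
    convert hg using 3
    simp only [v, Matrix.range_cons, Matrix.range_empty, union_empty, singleton_union]
    rfl
  exact disjoint_def.mp (range_ker_disjoint hv) g hspan hg2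

theorem exists_mem_genGrp2_fst_nonpos_snd_pos {α₁ β₁ α₂ β₂ : ℝ} (h : α₁ < β₁) :
    ∃ g ∈ genGrp2 α₁ β₁ α₂ β₂, g.1 ≤ 0 ∧ 0 < g.2 := by
  obtain ⟨d, hd⟩ := exists_nat_gt (β₁ - α₁)⁻¹
  have hgap : 1 < d * (β₁ - α₁) := (inv_lt_iff_one_lt_mul₀ (sub_pos.mpr h)).mp hd
  refine ⟨d • (α₁, β₁) - ⌈d * α₁⌉ • (1, 1),
    sub_mem (nsmul_mem (AddSubgroup.subset_closure (by simp)) d)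
      (zsmul_mem (AddSubgroup.subset_closure (by simp)) _), ?_, ?_⟩
  · simpa using Int.le_ceil (d * α₁)
  · simpa using (Int.ceil_lt_add_one ((d : ℝ) * α₁)).trans_le (by linarith)

theorem zero_kernel_never_group_like_general (α₁ β₁ α₂ β₂ : ℝ)
    (h1 : LinearIndependent ℚ ![(1 : ℝ), β₁, β₂])
    (ha1 : α₁ < β₁) :
    (∀ g ∈ genGrp2 α₁ β₁ α₂ β₂, g.2 = 0 → g = 0) ∧
    (∀ u : ℝ × ℝ, u ∈ genGrp2 α₁ β₁ α₂ β₂ → StrictPos u →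
      (∀ g ∈ genGrp2 α₁ β₁ α₂ β₂, ∃ N : ℕ,
        StrictPos ((N • u) - g) ∧ StrictPos ((N • u) + g)) →
      ¬ (∀ a ∈ genGrp2 α₁ β₁ α₂ β₂, 0 ≤ a.2 → a.2 ≤ u.2 →
          ∃ b ∈ genGrp2 α₁ β₁ α₂ β₂, StrictPos b ∧ StrictPos (u - b) ∧ b.2 = a.2)) := by
  have hker : ∀ g ∈ genGrp2 α₁ β₁ α₂ β₂, g.2 = 0 → g = 0 :=
    fun _ hg ↦ eq_zero_of_mem_genGrp2_of_snd_eq_zero h1 hg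
  refine ⟨hker, fun u hu huPos hOU hGL ↦ ?_⟩
  have hu0 : u ≠ 0 := by
    rintro rfl
    obtain ⟨N, hN, hN'⟩ := hOU (1, 1) (AddSubgroup.subset_closure (by simp))
    rw [smul_zero, zero_sub] at hN
    rw [smul_zero, zero_add] at hN'
    simpa using hN'.eq_zero_of_neg hN
  have hu2 : 0 < u.2 := (huPos.resolve_left hu0).2
  obtain ⟨g, hg, hg1, hg2⟩ :=
    exists_mem_genGrp2_fst_nonpos_snd_pos (α₂ := α₂) (β₂ := β₂) ha1
  rcases strictPos_of_snd_nonneg hu hu2 (fun _ ↦ strictPos_of_sndIsGroupLike hker hGL) hg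
    hg2.le with rfl | ⟨hg1', -⟩
  · exact hg2.ne rfl
  · linarith

theorem zero_kernel_never_group_like (α₁ β₁ α₂ β₂ : ℝ)
    (h1 : LinearIndependent ℚ ![(1 : ℝ), β₁, β₂])
    (h2 : LinearIndependent ℚ ![β₁ - α₁, β₂ - α₂, α₁ * β₂ - β₁ * α₂])
    (ha1 : α₁ < β₁) (ha2 : α₂ < β₂) (hs1 : α₁ + α₂ < 1) (hs2 : 1 < β₁ + β₂) :
    (∀ g ∈ genGrp2 α₁ β₁ α₂ β₂, g.2 = 0 → g = 0) ∧
    (∀ u : ℝ × ℝ, u ∈ genGrp2 α₁ β₁ α₂ β₂ → StrictPos u →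
      (∀ g ∈ genGrp2 α₁ β₁ α₂ β₂, ∃ N : ℕ,
        StrictPos ((N • u) - g) ∧ StrictPos ((N • u) + g)) →
      ¬ (∀ a ∈ genGrp2 α₁ β₁ α₂ β₂, 0 ≤ a.2 → a.2 ≤ u.2 →
          ∃ b ∈ genGrp2 α₁ β₁ α₂ β₂, StrictPos b ∧ StrictPos (u - b) ∧ b.2 = a.2)) :=
  zero_kernel_never_group_like_general α₁ β₁ α₂ β₂ h1 ha1

end Paper
end

section
/- Let G be a dimension group, I an order ideal of G contained in ker τ for a trace τ, let H = G/I with the quotient ordering, and let τ̃ be the trace induced on H by τ. Then τ is good if and only if τ̃ is good. -/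
/-!
A positive element of `G ⧸ I` below the image of `b ≥ 0` lifts, modulo `I`, to an element of
`[0, b]`: its representative `c` satisfies `c ≤ b + k` for some positive `k ∈ I` (directedness of
`I`), and Riesz decomposition splits `c` into a part in `[0, b]` and a part in `[0, k] ⊆ I`.
Since `τ` vanishes on `I`, good traces on `G` and on `G ⧸ I` thus correspond.
-/

namespace Paper

section OrderIdeal

variable {G : Type*} [AddCommGroup G] [PartialOrder G] [IsOrderedAddMonoid G] {I : AddSubgroup G}

theorem exists_nonneg_mem_le_add_of_sub_mem
    (hIdir : ∀ a ∈ I, ∀ b ∈ I, ∃ c ∈ I, a ≤ c ∧ b ≤ c) {a b : G} (h : a - b ∈ I) :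
    ∃ k ∈ I, 0 ≤ k ∧ a ≤ b + k := by
  obtain ⟨k, hkI, hk, hk0⟩ := hIdir (a - b) h 0 I.zero_mem
  exact ⟨k, hkI, hk0, by rwa [sub_le_iff_le_add'] at hk⟩

theorem RieszDecomp.exists_le_sub_mem (hR : RieszDecomp G)
    (hIideal : ∀ a b : G, 0 ≤ a → a ≤ b → b ∈ I → a ∈ I)
    {b c k : G} (hc : 0 ≤ c) (hb : 0 ≤ b) (hk : 0 ≤ k) (hkI : k ∈ I) (hcbk : c ≤ b + k) :
    ∃ b', 0 ≤ b' ∧ b' ≤ b ∧ c - b' ∈ I := by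
  obtain ⟨b', k', hb', hb'b, hk', hk'k, rfl⟩ := hR c b k hc hb hk hcbk
  exact ⟨b', hb', hb'b, by simpa using hIideal k' k hk' hk'k hkI⟩

theorem RieszDecomp.exists_le_sub_mem_of_mk_eq_sub (hR : RieszDecomp G)
    (hIdir : ∀ a ∈ I, ∀ b ∈ I, ∃ c ∈ I, a ≤ c ∧ b ≤ c)
    (hIideal : ∀ a b : G, 0 ≤ a → a ≤ b → b ∈ I → a ∈ I)
    {b c d : G} (hb : 0 ≤ b) (hc : 0 ≤ c) (hd : 0 ≤ d)
    (hmk : (QuotientAddGroup.mk d : G ⧸ I) = QuotientAddGroup.mk b - QuotientAddGroup.mk c) :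
    ∃ b', 0 ≤ b' ∧ b' ≤ b ∧ c - b' ∈ I := by
  have hcd : c + d - b ∈ I := by
    rw [← QuotientAddGroup.eq_zero_iff, QuotientAddGroup.mk_sub, QuotientAddGroup.mk_add, hmk]
    abel
  obtain ⟨k, hkI, hk, hcdk⟩ := exists_nonneg_mem_le_add_of_sub_mem hIdir hcd
  exact hR.exists_le_sub_mem hIideal hc hb hk hkI ((le_add_of_nonneg_right hd).trans hcdk)

end OrderIdeal

theorem good_iff_good_on_quotient_general {G : Type*} [AddCommGroup G] [PartialOrder G] [IsOrderedAddMonoid G]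
    (hG : DimGroup G) (τ : G →+ ℝ)
    (I : AddSubgroup G)
    (hIdir : ∀ a ∈ I, ∀ b ∈ I, ∃ c ∈ I, a ≤ c ∧ b ≤ c)
    (hIideal : ∀ a b : G, 0 ≤ a → a ≤ b → b ∈ I → a ∈ I)
    (hIker : ∀ g ∈ I, τ g = 0) :
    (∀ a b : G, 0 ≤ a → 0 ≤ b → τ a < τ b →
       ∃ c : G, 0 ≤ c ∧ c ≤ b ∧ τ c = τ a) ↔
    (∀ A B : G ⧸ I,
       (∃ a : G, 0 ≤ a ∧ (QuotientAddGroup.mk a : G ⧸ I) = A) →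
       (∃ b : G, 0 ≤ b ∧ (QuotientAddGroup.mk b : G ⧸ I) = B) →
       QuotientAddGroup.lift I τ hIker A < QuotientAddGroup.lift I τ hIker B →
       ∃ C : G ⧸ I, (∃ c : G, 0 ≤ c ∧ (QuotientAddGroup.mk c : G ⧸ I) = C) ∧
         (∃ d : G, 0 ≤ d ∧ (QuotientAddGroup.mk d : G ⧸ I) = B - C) ∧
         QuotientAddGroup.lift I τ hIker C = QuotientAddGroup.lift I τ hIker A) := by
  constructor
  · rintro hgood _ _ ⟨a, ha, rfl⟩ ⟨b, hb, rfl⟩ hlt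
    obtain ⟨c, hc, hcb, hτc⟩ := hgood a b ha hb hlt
    exact ⟨c, ⟨c, hc, rfl⟩, ⟨b - c, sub_nonneg.mpr hcb, QuotientAddGroup.mk_sub I b c⟩, hτc⟩
  · intro hgood a b ha hb hlt
    obtain ⟨_, ⟨c, hc, rfl⟩, ⟨d, hd, hmk⟩, hτc⟩ := hgood a b ⟨a, ha, rfl⟩ ⟨b, hb, rfl⟩ hlt
    obtain ⟨b', hb', hb'b, hcb'⟩ := hG.2.1.exists_le_sub_mem_of_mk_eq_sub hIdir hIideal hb hc hd hmk
    refine ⟨b', hb', hb'b, ?_⟩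
    have hτ_sub : τ c - τ b' = 0 := by rw [← map_sub]; exact hIker _ hcb'
    change τ c = τ a at hτc
    linarith

theorem good_iff_good_on_quotient {G : Type*} [AddCommGroup G] [PartialOrder G] [IsOrderedAddMonoid G]
    (hG : DimGroup G) (τ : G →+ ℝ) (hτ : IsTrace τ)
    (I : AddSubgroup G)
    (hIdir : ∀ a ∈ I, ∀ b ∈ I, ∃ c ∈ I, a ≤ c ∧ b ≤ c)
    (hIideal : ∀ a b : G, 0 ≤ a → a ≤ b → b ∈ I → a ∈ I)
    (hIker : ∀ g ∈ I, τ g = 0) :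
    (∀ a b : G, 0 ≤ a → 0 ≤ b → τ a < τ b →
       ∃ c : G, 0 ≤ c ∧ c ≤ b ∧ τ c = τ a) ↔
    (∀ A B : G ⧸ I,
       (∃ a : G, 0 ≤ a ∧ (QuotientAddGroup.mk a : G ⧸ I) = A) →
       (∃ b : G, 0 ≤ b ∧ (QuotientAddGroup.mk b : G ⧸ I) = B) →
       QuotientAddGroup.lift I τ hIker A < QuotientAddGroup.lift I τ hIker B →
       ∃ C : G ⧸ I, (∃ c : G, 0 ≤ c ∧ (QuotientAddGroup.mk c : G ⧸ I) = C) ∧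
         (∃ d : G, 0 ≤ d ∧ (QuotientAddGroup.mk d : G ⧸ I) = B - C) ∧
         QuotientAddGroup.lift I τ hIker C = QuotientAddGroup.lift I τ hIker A) :=
  good_iff_good_on_quotient_general hG τ I hIdir hIideal hIker

end Paper
end

section
/- Let G be a dimension group with order unit, J an order ideal of G, σ a pure trace on J, and τ a pure trace on G extending σ. Then τ is good if and only if (i) σ is good (as a trace of J) and (ii) σ(J⁺) = τ(G⁺). -/
/-!
Goodness passes to the order ideal `J` because `J` is hereditary. Since `τ` is nonzero on `J`, a
positive element of `G` has smaller trace than some multiple of a positive element of `J`, and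
goodness cuts that multiple down, inside `J`, to an element with the same trace: so `τ(J⁺) = τ(G⁺)`.
Conversely, given `0 ≤ a, b` with `τ a < τ b`, pick `a', b' ∈ J⁺` with the same traces. Purity of `τ`
gives `0 ≤ d ≤ b, b'` with `τ a < τ d`; then `d ∈ J`, and goodness in `J` yields `0 ≤ c ≤ d ≤ b`
with `τ c = τ a' = τ a`.
-/

namespace Paper

theorem exists_mem_nonneg_map_pos {G : Type*} [AddGroup G] [Preorder G] {τ : G →+ ℝ}
    {J : AddSubgroup G} (hmono : Monotone τ)
    (hJdir : ∀ a ∈ J, ∀ b ∈ J, ∃ c ∈ J, a ≤ c ∧ b ≤ c) (hne : ∃ j ∈ J, τ j ≠ 0) :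
    ∃ p ∈ J, 0 ≤ p ∧ 0 < τ p := by
  obtain ⟨j, hj, hτj⟩ := hne
  obtain ⟨s, hs, hτs⟩ : ∃ s ∈ J, 0 < τ s := by
    rcases hτj.lt_or_gt with h | h
    · exact ⟨-j, J.neg_mem hj, by simpa using h⟩
    · exact ⟨j, hj, h⟩
  obtain ⟨p, hp, hsp, hp0⟩ := hJdir s hs 0 J.zero_mem
  exact ⟨p, hp, hp0, hτs.trans_le (hmono hsp)⟩

section

variable {G : Type*} [AddCommGroup G] [PartialOrder G] [IsOrderedAddMonoid G] {τ : G →+ ℝ}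
  {J : AddSubgroup G}

theorem GoodTrace.exists_le_map_eq (hgood : GoodTrace τ) (hpos : ∀ g : G, 0 ≤ g → 0 ≤ τ g)
    {a b : G} (ha : 0 ≤ a) (hb : 0 ≤ b) (hab : τ a < τ b) :
    ∃ c : G, 0 ≤ c ∧ c ≤ b ∧ τ c = τ a := by
  rcases eq_or_ne a 0 with rfl | ha0
  · exact ⟨0, le_rfl, hb, rfl⟩
  have hb0 : b ≠ 0 := by
    rintro rfl
    linarith [hpos a ha, map_zero τ]
  exact hgood a b ha hb ha0 hb0 hab

theorem GoodTrace.restrict (hgood : GoodTrace τ)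
    (hJideal : ∀ a b : G, 0 ≤ a → a ≤ b → b ∈ J → a ∈ J) :
    ∀ a ∈ J, ∀ b ∈ J, 0 ≤ a → 0 ≤ b → a ≠ 0 → b ≠ 0 → τ a < τ b →
      ∃ c ∈ J, 0 ≤ c ∧ c ≤ b ∧ τ c = τ a := by
  intro a _ b hbJ ha hb ha0 hb0 hab
  obtain ⟨c, hc0, hcb, hcτ⟩ := hgood a b ha hb ha0 hb0 hab
  exact ⟨c, hJideal c b hc0 hcb hbJ, hc0, hcb, hcτ⟩

theorem GoodTrace.image_nonneg_mem_eq (hgood : GoodTrace τ) (hpos : ∀ g : G, 0 ≤ g → 0 ≤ τ g)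
    (hJideal : ∀ a b : G, 0 ≤ a → a ≤ b → b ∈ J → a ∈ J) (hJτ : ∃ p ∈ J, 0 ≤ p ∧ 0 < τ p) :
    (fun x : G => τ x) '' {g : G | g ∈ J ∧ 0 ≤ g} = (fun x : G => τ x) '' {g : G | 0 ≤ g} := by
  refine (Set.image_mono fun g hg => hg.2).antisymm ?_
  rintro _ ⟨g, hg, rfl⟩
  obtain ⟨p, hpJ, hp0, hτp⟩ := hJτ
  obtain ⟨n, hn⟩ := exists_nat_gt (τ g / τ p)
  have hgn : τ g < τ (n • p) := by
    rw [map_nsmul, nsmul_eq_mul]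
    exact (div_lt_iff₀ hτp).mp hn
  obtain ⟨c, hc0, hcn, hcτ⟩ := hgood.exists_le_map_eq hpos hg (nsmul_nonneg hp0 n) hgn
  exact ⟨c, ⟨hJideal c _ hc0 hcn (J.nsmul_mem hpJ n), hc0⟩, hcτ⟩

theorem goodTrace_of_restrict_of_image_nonneg_mem_eq (hpos : ∀ g : G, 0 ≤ g → 0 ≤ τ g)
    (hpure : ∀ ε : ℝ, 0 < ε → ∀ a b : G, 0 ≤ a → 0 ≤ b →
      ∃ c : G, 0 ≤ c ∧ c ≤ a ∧ c ≤ b ∧ min (τ a) (τ b) - ε < τ c)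
    (hJideal : ∀ a b : G, 0 ≤ a → a ≤ b → b ∈ J → a ∈ J)
    (hgoodJ : ∀ a ∈ J, ∀ b ∈ J, 0 ≤ a → 0 ≤ b → a ≠ 0 → b ≠ 0 → τ a < τ b →
      ∃ c ∈ J, 0 ≤ c ∧ c ≤ b ∧ τ c = τ a)
    (himage : (fun x : G => τ x) '' {g : G | g ∈ J ∧ 0 ≤ g} =
      (fun x : G => τ x) '' {g : G | 0 ≤ g}) :
    GoodTrace τ := by
  intro a b ha hb _ _ hab
  rcases (hpos a ha).eq_or_lt with hτa | hτa
  · exact ⟨0, le_rfl, hb, by rw [map_zero, hτa]⟩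
  obtain ⟨a', ⟨ha'J, ha'0⟩, hτa'⟩ : τ a ∈ (fun x : G => τ x) '' {g : G | g ∈ J ∧ 0 ≤ g} :=
    himage ▸ ⟨a, ha, rfl⟩
  obtain ⟨b', ⟨hb'J, hb'0⟩, hτb'⟩ : τ b ∈ (fun x : G => τ x) '' {g : G | g ∈ J ∧ 0 ≤ g} :=
    himage ▸ ⟨b, hb, rfl⟩
  obtain ⟨d, hd0, hdb, hdb', hτd⟩ := hpure (τ b - τ a) (sub_pos.mpr hab) b b' hb hb'0
  simp only [hτb', min_self, sub_sub_cancel] at hτd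
  have ha'ne : a' ≠ 0 := by
    rintro rfl
    exact hτa.ne' (hτa'.symm.trans (map_zero τ))
  have hdne : d ≠ 0 := by
    rintro rfl
    rw [map_zero] at hτd
    linarith
  obtain ⟨c, _, hc0, hcd, hτc⟩ := hgoodJ a' ha'J d (hJideal d b' hd0 hdb' hb'J) ha'0 hd0
    ha'ne hdne (hτa'.trans_lt hτd)
  exact ⟨c, hc0, hcd.trans hdb, hτc.trans hτa'⟩

end

theorem good_iff_restriction_good_and_same_values_general {G : Type*} [AddCommGroup G] [PartialOrder G] [IsOrderedAddMonoid G]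
    (J : AddSubgroup G)
    (hJdir : ∀ a ∈ J, ∀ b ∈ J, ∃ c ∈ J, a ≤ c ∧ b ≤ c)
    (hJideal : ∀ a b : G, 0 ≤ a → a ≤ b → b ∈ J → a ∈ J)
    (τ : G →+ ℝ) (hτ : IsTrace τ)
    -- τ is a pure trace of G (purity criterion of [GH1; Theorem 3.1])
    (hpureτ : ∀ ε : ℝ, 0 < ε → ∀ a b : G, 0 ≤ a → 0 ≤ b →
      ∃ c : G, 0 ≤ c ∧ c ≤ a ∧ c ≤ b ∧ min (τ a) (τ b) - ε < τ c)
    -- σ = τ|J is a nonzero trace of J ...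
    (hσne : ∃ j ∈ J, τ j ≠ 0) :
    GoodTrace τ ↔
      ((∀ a ∈ J, ∀ b ∈ J, 0 ≤ a → 0 ≤ b → a ≠ 0 → b ≠ 0 → τ a < τ b →
          ∃ c ∈ J, 0 ≤ c ∧ c ≤ b ∧ τ c = τ a) ∧
        (fun x : G => τ x) '' {g : G | g ∈ J ∧ 0 ≤ g} =
          (fun x : G => τ x) '' {g : G | 0 ≤ g}) := by
  have hJτ := exists_mem_nonneg_map_pos ((monotone_iff_map_nonneg τ).2 hτ.1) hJdir hσne
  exact ⟨fun hgood => ⟨hgood.restrict hJideal, hgood.image_nonneg_mem_eq hτ.1 hJideal hJτ⟩,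
    fun ⟨hgoodJ, himage⟩ =>
      goodTrace_of_restrict_of_image_nonneg_mem_eq hτ.1 hpureτ hJideal hgoodJ himage⟩

theorem good_iff_restriction_good_and_same_values {G : Type*} [AddCommGroup G] [PartialOrder G] [IsOrderedAddMonoid G]
    (hG : DimGroup G) (u : G) (hu : IsOrderUnit u)
    (J : AddSubgroup G)
    (hJdir : ∀ a ∈ J, ∀ b ∈ J, ∃ c ∈ J, a ≤ c ∧ b ≤ c)
    (hJideal : ∀ a b : G, 0 ≤ a → a ≤ b → b ∈ J → a ∈ J)
    (τ : G →+ ℝ) (hτ : IsTrace τ)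
    -- τ is a pure trace of G (purity criterion of [GH1; Theorem 3.1])
    (hpureτ : ∀ ε : ℝ, 0 < ε → ∀ a b : G, 0 ≤ a → 0 ≤ b →
      ∃ c : G, 0 ≤ c ∧ c ≤ a ∧ c ≤ b ∧ min (τ a) (τ b) - ε < τ c)
    -- σ = τ|J is a nonzero trace of J ...
    (hσne : ∃ j ∈ J, τ j ≠ 0)
    -- ... and is a pure trace of J (purity criterion, relative to J)
    (hpureσ : ∀ ε : ℝ, 0 < ε → ∀ a ∈ J, ∀ b ∈ J, 0 ≤ a → 0 ≤ b →
      ∃ c ∈ J, 0 ≤ c ∧ c ≤ a ∧ c ≤ b ∧ min (τ a) (τ b) - ε < τ c) :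
    GoodTrace τ ↔
      ((∀ a ∈ J, ∀ b ∈ J, 0 ≤ a → 0 ≤ b → a ≠ 0 → b ≠ 0 → τ a < τ b →
          ∃ c ∈ J, 0 ≤ c ∧ c ≤ b ∧ τ c = τ a) ∧
        (fun x : G => τ x) '' {g : G | g ∈ J ∧ 0 ≤ g} =
          (fun x : G => τ x) '' {g : G | 0 ≤ g}) :=
  good_iff_restriction_good_and_same_values_general J hJdir hJideal τ hτ hpureτ hσne

end Paper
end

section
/- Let (G,u) be a dimension group with order unit, and let τ₁, τ₂ be distinct pure normalized traces. Let λ ∈ (0,1) and τ = λτ₁ + (1−λ)τ₂. If λτ₁(G) ∩ (1−λ)τ₂(G) = {0}, and G is approximately divisible (the image of G is dense in Aff S(G,u)), then τ is not good. -/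
/-!
Approximate divisibility lets us approximate the affine function `σ ↦ α σ(x)` on the state space,
where `τ₁ x ≠ τ₂ x`; shifting by a multiple of `u` yields `b ≥ 0` with `τ₂ b` much larger than
`τ₁ b`. Take `a = M u` with `τ₁ b < M ≤ τ₁ b + 1`; then `τ a = M < τ b`. If `c ≤ b` had
`τ c = τ a`, then `λ τ₁(c - a) = (1 - λ) τ₂(a - c)` lies in both `λ τ₁(G)` and `(1 - λ) τ₂(G)`,
so `τ₁ c = M`, which contradicts `τ₁ c ≤ τ₁ b < M`.
-/

namespace Paper

/-- The normalized trace (state) space of `(G, u)`, realized as a set of real-valued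
functions on `G` (with the topology of pointwise convergence on `G → ℝ`). -/
def StateSet (G : Type*) [AddCommGroup G] [PartialOrder G] [IsOrderedAddMonoid G] (u : G) : Set (G → ℝ) :=
  {f | (∀ a b : G, f (a + b) = f a + f b) ∧ (∀ g : G, 0 ≤ g → 0 ≤ f g) ∧ f u = 1}

/-- `(G,u)` is approximately divisible: the image of `G` under the affine
representation is norm dense in `Aff S(G,u)`, i.e. every continuous affine
real-valued function on the state space is uniformly approximable by elements `ĝ`. -/
def ApproxDivisible (G : Type*) [AddCommGroup G] [PartialOrder G] [IsOrderedAddMonoid G] (u : G) : Prop :=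
  ∀ f : (G → ℝ) → ℝ, ContinuousOn f (StateSet G u) →
    (∀ σ₁ ∈ StateSet G u, ∀ σ₂ ∈ StateSet G u, ∀ t : ℝ, 0 ≤ t → t ≤ 1 →
      f (fun g => t * σ₁ g + (1 - t) * σ₂ g) = t * f σ₁ + (1 - t) * f σ₂) →
    ∀ ε : ℝ, 0 < ε → ∃ g : G, ∀ σ ∈ StateSet G u, |f σ - σ g| < ε

/-- A pure (extreme) normalized trace of `(G,u)`. -/
def IsPureState (G : Type*) [AddCommGroup G] [PartialOrder G] [IsOrderedAddMonoid G] (u : G) (τ : G → ℝ) : Prop :=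
  τ ∈ StateSet G u ∧ ∀ σ₁ ∈ StateSet G u, ∀ σ₂ ∈ StateSet G u, ∀ t : ℝ, 0 < t → t < 1 →
    (τ = fun g => t * σ₁ g + (1 - t) * σ₂ g) → σ₁ = τ ∧ σ₂ = τ

section States

variable {G : Type*} [AddCommGroup G] [PartialOrder G] [IsOrderedAddMonoid G] {u : G}
  {σ σ₁ σ₂ : G → ℝ}

theorem StateSet.map_zero (hσ : σ ∈ StateSet G u) : σ 0 = 0 :=
  (AddMonoidHom.mk' σ hσ.1).map_zero

theorem StateSet.map_sub (hσ : σ ∈ StateSet G u) (a b : G) : σ (a - b) = σ a - σ b :=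
  (AddMonoidHom.mk' σ hσ.1).map_sub a b

theorem StateSet.map_nsmul_unit (hσ : σ ∈ StateSet G u) (n : ℕ) : σ (n • u) = n := by
  rw [show σ (n • u) = n • σ u from map_nsmul (AddMonoidHom.mk' σ hσ.1) n u, hσ.2.2,
    nsmul_eq_mul, mul_one]

theorem StateSet.monotone (hσ : σ ∈ StateSet G u) : Monotone σ := fun a b hab => by
  have := hσ.2.1 (b - a) (sub_nonneg.2 hab)
  rw [StateSet.map_sub hσ] at this
  linarith

theorem IsOrderUnit.exists_nonneg_add_nsmul (hu : IsOrderUnit u) (g : G) :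
    ∃ N : ℕ, 0 ≤ g + N • u := by
  obtain ⟨N, hN, -⟩ := hu.2 g
  exact ⟨N, neg_le_iff_add_nonneg.1 hN⟩

theorem ApproxDivisible.exists_lt_sub (hAD : ApproxDivisible G u) (hσ₁ : σ₁ ∈ StateSet G u)
    (hσ₂ : σ₂ ∈ StateSet G u) (hne : σ₁ ≠ σ₂) (K : ℝ) : ∃ g : G, σ₁ g + K < σ₂ g := by
  obtain ⟨x, hx⟩ := Function.ne_iff.1 hne
  set α := (K + 2) / (σ₂ x - σ₁ x)
  have hα : α * σ₂ x - α * σ₁ x = K + 2 := by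
    rw [← mul_sub, div_mul_cancel₀ _ (sub_ne_zero.2 hx.symm)]
  obtain ⟨g, hg⟩ := hAD (fun σ => α * σ x) (continuous_const.mul (continuous_apply x)).continuousOn
    (fun _ _ _ _ _ _ _ => by ring) 1 one_pos
  have hg₁ := abs_lt.1 (hg σ₁ hσ₁)
  have hg₂ := abs_lt.1 (hg σ₂ hσ₂)
  exact ⟨g, by linarith [hg₁.2, hg₂.1]⟩

theorem ApproxDivisible.exists_nonneg_lt_sub (hAD : ApproxDivisible G u) (hu : IsOrderUnit u)
    (hσ₁ : σ₁ ∈ StateSet G u) (hσ₂ : σ₂ ∈ StateSet G u) (hne : σ₁ ≠ σ₂) (K : ℝ) :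
    ∃ b : G, 0 ≤ b ∧ σ₁ b + K < σ₂ b := by
  obtain ⟨g, hg⟩ := hAD.exists_lt_sub hσ₁ hσ₂ hne K
  obtain ⟨N, hN⟩ := hu.exists_nonneg_add_nsmul g
  refine ⟨g + N • u, hN, ?_⟩
  rw [hσ₁.1, hσ₂.1, StateSet.map_nsmul_unit hσ₁, StateSet.map_nsmul_unit hσ₂]
  linarith

theorem StateSet.eq_of_convex_eq_of_inter_eq_zero {l : ℝ} (hl : l ≠ 0)
    (hcap : ∀ x y : G, l * σ₁ x = (1 - l) * σ₂ y → l * σ₁ x = 0)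
    (hσ₁ : σ₁ ∈ StateSet G u) (hσ₂ : σ₂ ∈ StateSet G u) {a c : G}
    (h : l * σ₁ c + (1 - l) * σ₂ c = l * σ₁ a + (1 - l) * σ₂ a) : σ₁ c = σ₁ a := by
  have hzero := hcap (c - a) (a - c) (by
    rw [StateSet.map_sub hσ₁, StateSet.map_sub hσ₂]
    linear_combination h)
  rw [StateSet.map_sub hσ₁] at hzero
  exact sub_eq_zero.1 ((mul_eq_zero.1 hzero).resolve_left hl)

end States

theorem convex_combination_not_good_general {G : Type*} [AddCommGroup G] [PartialOrder G] [IsOrderedAddMonoid G]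
    (u : G) (hu : IsOrderUnit u)
    (hAD : ApproxDivisible G u)
    (τ₁ τ₂ : G → ℝ) (h1 : IsPureState G u τ₁) (h2 : IsPureState G u τ₂) (hne : τ₁ ≠ τ₂)
    (l : ℝ) (hl0 : 0 < l) (hl1 : l < 1)
    -- λ·τ₁(G) ∩ (1-λ)·τ₂(G) = {0}
    (hcap : ∀ x y : G, l * τ₁ x = (1 - l) * τ₂ y → l * τ₁ x = 0) :
    -- τ = λτ₁ + (1-λ)τ₂ is not good
    ¬ (∀ a b : G, 0 ≤ a → 0 ≤ b → a ≠ 0 → b ≠ 0 →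
        l * τ₁ a + (1 - l) * τ₂ a < l * τ₁ b + (1 - l) * τ₂ b →
        ∃ c : G, 0 ≤ c ∧ c ≤ b ∧
          l * τ₁ c + (1 - l) * τ₂ c = l * τ₁ a + (1 - l) * τ₂ a) := by
  intro hGood
  have hl' : 0 < 1 - l := sub_pos.2 hl1
  obtain ⟨b, hb, hgap⟩ := hAD.exists_nonneg_lt_sub hu h1.1 h2.1 hne (1 / (1 - l))
  set M := ⌊τ₁ b⌋₊ + 1
  have hbM : τ₁ b < M := by exact_mod_cast Nat.lt_floor_add_one (τ₁ b)
  have hMb : (M : ℝ) ≤ τ₁ b + 1 := by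
    simp only [M, Nat.cast_add, Nat.cast_one]
    linarith [Nat.floor_le (h1.1.2.1 b hb)]
  have hτa₁ := StateSet.map_nsmul_unit h1.1 M
  have hτa₂ := StateSet.map_nsmul_unit h2.1 M
  have hlt : l * τ₁ (M • u) + (1 - l) * τ₂ (M • u) < l * τ₁ b + (1 - l) * τ₂ b := by
    have := mul_lt_mul_of_pos_left hgap hl'
    rw [mul_add, mul_one_div_cancel hl'.ne'] at this
    rw [hτa₁, hτa₂]
    linarith
  have ha0 : M • u ≠ 0 := fun h => by
    rw [h, StateSet.map_zero h1.1] at hτa₁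
    linarith [h1.1.2.1 b hb]
  have hb0 : b ≠ 0 := by
    rintro rfl
    rw [StateSet.map_zero h1.1, StateSet.map_zero h2.1] at hgap
    linarith [one_div_pos.2 hl']
  obtain ⟨c, -, hcb, hc⟩ := hGood _ b (nsmul_nonneg hu.1 M) hb ha0 hb0 hlt
  have hτc := StateSet.eq_of_convex_eq_of_inter_eq_zero hl0.ne' hcap h1.1 h2.1 hc
  linarith [StateSet.monotone h1.1 hcb]

theorem convex_combination_not_good {G : Type*} [AddCommGroup G] [PartialOrder G] [IsOrderedAddMonoid G]
    (hG : DimGroup G) (u : G) (hu : IsOrderUnit u)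
    (hAD : ApproxDivisible G u)
    (τ₁ τ₂ : G → ℝ) (h1 : IsPureState G u τ₁) (h2 : IsPureState G u τ₂) (hne : τ₁ ≠ τ₂)
    (l : ℝ) (hl0 : 0 < l) (hl1 : l < 1)
    -- λ·τ₁(G) ∩ (1-λ)·τ₂(G) = {0}
    (hcap : ∀ x y : G, l * τ₁ x = (1 - l) * τ₂ y → l * τ₁ x = 0) :
    -- τ = λτ₁ + (1-λ)τ₂ is not good
    ¬ (∀ a b : G, 0 ≤ a → 0 ≤ b → a ≠ 0 → b ≠ 0 →
        l * τ₁ a + (1 - l) * τ₂ a < l * τ₁ b + (1 - l) * τ₂ b →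
        ∃ c : G, 0 ≤ c ∧ c ≤ b ∧
          l * τ₁ c + (1 - l) * τ₂ c = l * τ₁ a + (1 - l) * τ₂ a) :=
  convex_combination_not_good_general u hu hAD τ₁ τ₂ h1 h2 hne l hl0 hl1 hcap

end Paper
end

section
/- Let (X,S) and (Y,T) be compact zero-dimensional dynamical systems, and let ν be a probability measure on X × Y that is extremal among the measures invariant under the ℤ²-action generated by S × id and id × T. Then there exist an extremal S-invariant probability measure μ₁ on X and an extremal T-invariant probability measure μ₂ on Y such that ν = μ₁ × μ₂. -/
open MeasureTheory

namespace Paper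

/-- `μ` is extremal (ergodic) among `f`-invariant probability measures. -/
def ExtremalInvariant {Z : Type*} [MeasurableSpace Z] (f : Z → Z) (μ : Measure Z) : Prop :=
  ∀ μ₁ μ₂ : Measure Z, IsProbabilityMeasure μ₁ → IsProbabilityMeasure μ₂ →
    μ₁.map f = μ₁ → μ₂.map f = μ₂ →
    ∀ t : ENNReal, 0 < t → t < 1 → μ = t • μ₁ + (1 - t) • μ₂ → μ₁ = μ ∧ μ₂ = μ

/-- `μ` is extremal (ergodic) among probability measures invariant under the
`ℤ²`-action generated by `f` and `g`. -/
def ExtremalInvariant2 {Z : Type*} [MeasurableSpace Z] (f g : Z → Z) (μ : Measure Z) : Prop :=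
  ∀ μ₁ μ₂ : Measure Z, IsProbabilityMeasure μ₁ → IsProbabilityMeasure μ₂ →
    μ₁.map f = μ₁ → μ₁.map g = μ₁ → μ₂.map f = μ₂ → μ₂.map g = μ₂ →
    ∀ t : ENNReal, 0 < t → t < 1 → μ = t • μ₁ + (1 - t) • μ₂ → μ₁ = μ ∧ μ₂ = μ

/-! Both steps use extremality in additive form: an invariant summand of an extremal measure is a
scalar multiple of it.

The marginal `μ₁ = ν.map Prod.fst` is extremal: a splitting `μ₁ = ρ + ρ'` into `S`-invariant
measures lifts, through the densities `dρ/dμ₁ ∘ Prod.fst` and `dρ'/dμ₁ ∘ Prod.fst`, to a splitting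
of `ν` into measures invariant under `S × id` and `id × T`, which are therefore multiples of `ν`;
projecting back, `ρ` is a multiple of `μ₁`. Symmetrically for `μ₂`.

For the product structure, fix a measurable `B ⊆ Y`. The restrictions of `ν` to `X × B` and to
`X × Bᶜ` are `S × id`-invariant, so their projections to `X` are `S`-invariant and add up to `μ₁`.
Extremality of `μ₁` gives `ν (A ×ˢ B) = μ₂ B * μ₁ A`. -/

open Function Set
open scoped ENNReal

section Extremality

variable {Z : Type*} [MeasurableSpace Z]

lemma extremalInvariant_iff_extremalInvariant2_id {f : Z → Z} {μ : Measure Z} :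
    ExtremalInvariant f μ ↔ ExtremalInvariant2 f id μ := by
  refine ⟨fun h α β hα hβ hαf _ hβf _ => h α β hα hβ hαf hβf,
    fun h α β hα hβ hαf hβf => h α β hα hβ hαf ?_ hβf ?_⟩ <;> exact Measure.map_id

lemma ExtremalInvariant2.swap {f g : Z → Z} {μ : Measure Z} (h : ExtremalInvariant2 f g μ) :
    ExtremalInvariant2 g f μ :=
  fun α β hα hβ hαg hαf hβg hβf => h α β hα hβ hαf hαg hβf hβg

lemma isProbabilityMeasure_inv_smul {ρ : Measure Z} {c : ℝ≥0∞} (hρ : ρ univ = c) (h0 : c ≠ 0)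
    (htop : c ≠ ∞) : IsProbabilityMeasure (c⁻¹ • ρ) :=
  ⟨by rw [Measure.smul_apply, hρ, smul_eq_mul, ENNReal.inv_mul_cancel h0 htop]⟩

lemma smul_inv_smul_measure {c : ℝ≥0∞} (h0 : c ≠ 0) (htop : c ≠ ∞) (ρ : Measure Z) :
    c • c⁻¹ • ρ = ρ := by
  rw [smul_smul, ENNReal.mul_inv_cancel h0 htop, one_smul]

lemma ExtremalInvariant2.eq_smul_of_add_eq {f g : Z → Z} {μ : Measure Z} [IsProbabilityMeasure μ]
    (hext : ExtremalInvariant2 f g μ) {ρ ρ' : Measure Z} (hρf : ρ.map f = ρ) (hρg : ρ.map g = ρ)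
    (hρ'f : ρ'.map f = ρ') (hρ'g : ρ'.map g = ρ') (hsum : ρ + ρ' = μ) :
    ρ = ρ univ • μ := by
  set c := ρ univ with hc
  have hmass : c + ρ' univ = 1 := by rw [hc, ← Measure.add_apply, hsum, measure_univ]
  rcases eq_or_ne c 0 with hc0 | hc0
  · rw [hc0, zero_smul, ← Measure.measure_univ_eq_zero, ← hc, hc0]
  have hcle : c ≤ 1 := hmass ▸ le_self_add
  rcases hcle.eq_or_lt with hc1 | hc1
  · have hρ' : ρ' = 0 := by
      rw [← Measure.measure_univ_eq_zero]
      simpa [hc1] using hmass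
    rw [hc1, one_smul, ← hsum, hρ', add_zero]
  have hctop : c ≠ ∞ := ne_top_of_le_ne_top ENNReal.one_ne_top hcle
  have h1c0 : 1 - c ≠ 0 := (tsub_pos_of_lt hc1).ne'
  have h1ctop : 1 - c ≠ ∞ := ENNReal.sub_ne_top ENNReal.one_ne_top
  have hρ'mass : ρ' univ = 1 - c := ENNReal.eq_sub_of_add_eq hctop (add_comm c _ ▸ hmass)
  have hdecomp : μ = c • (c⁻¹ • ρ) + (1 - c) • ((1 - c)⁻¹ • ρ') := by
    rw [smul_inv_smul_measure hc0 hctop, smul_inv_smul_measure h1c0 h1ctop, hsum]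
  obtain ⟨hρμ, -⟩ := hext _ _ (isProbabilityMeasure_inv_smul rfl hc0 hctop)
    (isProbabilityMeasure_inv_smul hρ'mass h1c0 h1ctop)
    (by rw [Measure.map_smul, hρf]) (by rw [Measure.map_smul, hρg])
    (by rw [Measure.map_smul, hρ'f]) (by rw [Measure.map_smul, hρ'g])
    c (pos_iff_ne_zero.2 hc0) hc1 hdecomp
  rw [← hρμ, smul_inv_smul_measure hc0 hctop]

lemma ExtremalInvariant.eq_smul_of_add_eq {f : Z → Z} {μ : Measure Z} [IsProbabilityMeasure μ]
    (hext : ExtremalInvariant f μ) {ρ ρ' : Measure Z} (hρ : ρ.map f = ρ) (hρ' : ρ'.map f = ρ')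
    (hsum : ρ + ρ' = μ) : ρ = ρ univ • μ :=
  (extremalInvariant_iff_extremalInvariant2_id.1 hext).eq_smul_of_add_eq hρ Measure.map_id hρ'
    Measure.map_id hsum

lemma extremalInvariant_of_eq_smul_of_add_eq {f : Z → Z} {μ : Measure Z} [IsProbabilityMeasure μ]
    (h : ∀ ρ ρ' : Measure Z, ρ.map f = ρ → ρ'.map f = ρ' → ρ + ρ' = μ → ρ = ρ univ • μ) :
    ExtremalInvariant f μ := by
  have cancel : ∀ {c : ℝ≥0∞} {α : Measure Z}, IsProbabilityMeasure α → c ≠ 0 → c ≠ ∞ →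
      c • α = (c • α) univ • μ → α = μ := by
    intro c α _ h0 htop hα
    rw [Measure.smul_apply, measure_univ, smul_eq_mul, mul_one] at hα
    ext s -
    simpa only [Measure.smul_apply, smul_eq_mul, ENNReal.mul_right_inj h0 htop] using
      congrArg (· s) hα
  intro α β hα hβ hαf hβf t ht0 ht1 hdecomp
  have ht1' : 1 - t ≠ 0 := (tsub_pos_of_lt ht1).ne'
  have hαf' : (t • α).map f = t • α := by rw [Measure.map_smul, hαf]
  have hβf' : ((1 - t) • β).map f = (1 - t) • β := by rw [Measure.map_smul, hβf]
  exact ⟨cancel hα ht0.ne' ht1.ne_top (h _ _ hαf' hβf' hdecomp.symm),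
    cancel hβ ht1' (ENNReal.sub_ne_top ENNReal.one_ne_top)
      (h _ _ hβf' hαf' ((add_comm _ _).trans hdecomp.symm))⟩

end Extremality

section Factor

variable {Z X : Type*} [MeasurableSpace Z] [MeasurableSpace X]

lemma map_map_eq_of_semiconj {ν : Measure Z} {f : Z → Z} {π : Z → X} {S : X → X}
    (hf : Measurable f) (hπ : Measurable π) (hS : Measurable S) (hνf : ν.map f = ν)
    (hπf : Semiconj π f S) : (ν.map π).map S = ν.map π := by
  rw [Measure.map_map hS hπ, ← hπf.comp_eq, ← Measure.map_map hπ hf, hνf]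

lemma map_withDensity_comp {π : Z → X} (hπ : Measurable π) (ν : Measure Z) {k : X → ℝ≥0∞}
    (hk : Measurable k) : (ν.withDensity (k ∘ π)).map π = (ν.map π).withDensity k := by
  ext s hs
  rw [Measure.map_apply hπ hs, withDensity_apply _ (hπ hs), withDensity_apply _ hs,
    setLIntegral_map hs hk hπ]
  rfl

lemma map_withDensity_eq_self {ν : Measure Z} {f : Z → Z} (hf : Measurable f)
    (hνf : ν.map f = ν) {k : Z → ℝ≥0∞} (hk : Measurable k) (hkf : k ∘ f =ᵐ[ν] k) :
    (ν.withDensity k).map f = ν.withDensity k :=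
  calc (ν.withDensity k).map f = (ν.withDensity (k ∘ f)).map f := by
        rw [withDensity_congr_ae hkf]
    _ = ν.withDensity k := by rw [map_withDensity_comp hf ν hk, hνf]

noncomputable def liftAlong (ν : Measure Z) (π : Z → X) (ρ : Measure X) : Measure Z :=
  ν.withDensity (ρ.rnDeriv (ν.map π) ∘ π)

variable {ν : Measure Z} [IsFiniteMeasure ν] {π : Z → X}

lemma map_liftAlong (hπ : Measurable π) {ρ : Measure X} [IsFiniteMeasure ρ] (hρ : ρ ≪ ν.map π) :
    (liftAlong ν π ρ).map π = ρ := by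
  rw [liftAlong, map_withDensity_comp hπ ν (Measure.measurable_rnDeriv _ _),
    Measure.withDensity_rnDeriv_eq _ _ hρ]

lemma liftAlong_add_liftAlong (hπ : Measurable π) {ρ ρ' : Measure X} [IsFiniteMeasure ρ]
    [IsFiniteMeasure ρ'] (hsum : ρ + ρ' = ν.map π) :
    liftAlong ν π ρ + liftAlong ν π ρ' = ν := by
  have hdens : ρ.rnDeriv (ν.map π) + ρ'.rnDeriv (ν.map π) =ᵐ[ν.map π] 1 := by
    have hadd := Measure.rnDeriv_add ρ ρ' (ν.map π)
    rw [hsum] at hadd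
    exact hadd.symm.trans (Measure.rnDeriv_self _)
  rw [liftAlong, liftAlong, ← withDensity_add_left ((Measure.measurable_rnDeriv _ _).comp hπ)]
  conv_rhs => rw [← withDensity_one (μ := ν)]
  exact withDensity_congr_ae (ae_of_ae_map hπ.aemeasurable hdens)

/-- The invertibility of `S` is what makes the density of `ρ` with respect to `ν.map π`
`S`-invariant. -/
lemma map_liftAlong_of_semiconj (hπ : Measurable π) {f : Z → Z} (hf : Measurable f)
    (hνf : ν.map f = ν) (S : X ≃ᵐ X) (hπf : Semiconj π f S) {ρ : Measure X} [IsFiniteMeasure ρ]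
    (hρS : ρ.map S = ρ) : (liftAlong ν π ρ).map f = liftAlong ν π ρ := by
  have hdens : ρ.rnDeriv (ν.map π) ∘ S =ᵐ[ν.map π] ρ.rnDeriv (ν.map π) := by
    have h := S.measurableEmbedding.rnDeriv_map ρ (ν.map π)
    rwa [hρS, map_map_eq_of_semiconj hf hπ S.measurable hνf hπf] at h
  refine map_withDensity_eq_self hf hνf ((Measure.measurable_rnDeriv _ _).comp hπ) ?_
  have hcomp : (ρ.rnDeriv (ν.map π) ∘ π) ∘ f = (ρ.rnDeriv (ν.map π) ∘ S) ∘ π := by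
    funext z
    exact congrArg _ (hπf z)
  rw [hcomp]
  exact ae_of_ae_map hπ.aemeasurable hdens

end Factor

section Marginals

variable {Z X : Type*} [MeasurableSpace Z] [MeasurableSpace X] {ν : Measure Z}
  [IsProbabilityMeasure ν] {π : Z → X}

theorem ExtremalInvariant2.extremalInvariant_map {f g : Z → Z} (hf : Measurable f)
    (hg : Measurable g) (hνf : ν.map f = ν) (hνg : ν.map g = ν) (hext : ExtremalInvariant2 f g ν)
    (hπ : Measurable π) (S : X ≃ᵐ X) (hπf : Semiconj π f S) (hπg : Semiconj π g id) :
    ExtremalInvariant S (ν.map π) := by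
  have : IsProbabilityMeasure (ν.map π) := Measure.isProbabilityMeasure_map hπ.aemeasurable
  refine extremalInvariant_of_eq_smul_of_add_eq fun ρ ρ' hρ hρ' hsum => ?_
  have hρle : ρ ≤ ν.map π := hsum ▸ Measure.le_add_right le_rfl
  have : IsFiniteMeasure ρ := isFiniteMeasure_of_le _ hρle
  have : IsFiniteMeasure ρ' := isFiniteMeasure_of_le _ (hsum ▸ Measure.le_add_left le_rfl)
  have hinv : ∀ (σ : Measure X) [IsFiniteMeasure σ], σ.map S = σ →
      (liftAlong ν π σ).map f = liftAlong ν π σ ∧ (liftAlong ν π σ).map g = liftAlong ν π σ :=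
    fun σ _ hσ => ⟨map_liftAlong_of_semiconj hπ hf hνf S hπf hσ,
      map_liftAlong_of_semiconj hπ hg hνg (MeasurableEquiv.refl X) hπg Measure.map_id⟩
  have hlift : liftAlong ν π ρ = liftAlong ν π ρ univ • ν :=
    hext.eq_smul_of_add_eq (hinv ρ hρ).1 (hinv ρ hρ).2 (hinv ρ' hρ').1 (hinv ρ' hρ').2
      (liftAlong_add_liftAlong hπ hsum)
  have hmap := map_liftAlong hπ (Measure.absolutelyContinuous_of_le hρle)
  have hmass := congrArg (· univ) hmap
  rw [Measure.map_apply hπ MeasurableSet.univ, preimage_univ] at hmass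
  calc ρ = (liftAlong ν π ρ).map π := hmap.symm
    _ = (liftAlong ν π ρ univ • ν).map π := by rw [← hlift]
    _ = ρ univ • ν.map π := by rw [Measure.map_smul, hmass]

lemma ExtremalInvariant.map_restrict_eq_smul {f : Z → Z} (hf : Measurable f) (hνf : ν.map f = ν)
    (hπ : Measurable π) {S : X → X} (hS : Measurable S) (hπf : Semiconj π f S)
    (hext : ExtremalInvariant S (ν.map π)) {s : Set Z} (hs : MeasurableSet s)
    (hfs : f ⁻¹' s = s) : (ν.restrict s).map π = ν s • ν.map π := by
  have : IsProbabilityMeasure (ν.map π) := Measure.isProbabilityMeasure_map hπ.aemeasurable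
  have hinv : ∀ t, MeasurableSet t → f ⁻¹' t = t →
      ((ν.restrict t).map π).map S = (ν.restrict t).map π :=
    fun t ht hft => map_map_eq_of_semiconj hf hπ hS
      (by simpa only [hft] using (MeasurePreserving.restrict_preimage ⟨hf, hνf⟩ ht).map_eq) hπf
  have hsum : (ν.restrict s).map π + (ν.restrict sᶜ).map π = ν.map π := by
    rw [← Measure.map_add _ _ hπ, Measure.restrict_add_restrict_compl hs]
  rw [hext.eq_smul_of_add_eq (hinv s hs hfs) (hinv sᶜ hs.compl (by rw [preimage_compl, hfs])) hsum,
    Measure.map_apply hπ MeasurableSet.univ, preimage_univ, Measure.restrict_apply_univ]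

end Marginals

theorem eq_prod_of_extremalInvariant_map_fst {X Y : Type*} [MeasurableSpace X]
    [MeasurableSpace Y] {ν : Measure (X × Y)} [IsProbabilityMeasure ν] {S : X → X}
    (hS : Measurable S) (hνS : ν.map (fun p => (S p.1, p.2)) = ν)
    (hext : ExtremalInvariant S (ν.map Prod.fst)) :
    ν = (ν.map Prod.fst).prod (ν.map Prod.snd) := by
  refine (Measure.prod_eq fun A B hA hB => ?_).symm
  have hcond := hext.map_restrict_eq_smul (by fun_prop) hνS measurable_fst hS (fun _ => rfl)
    (measurable_snd hB) rfl
  calc ν (A ×ˢ B) = (ν.restrict (Prod.snd ⁻¹' B)).map Prod.fst A := by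
        rw [Measure.map_apply measurable_fst hA, Measure.restrict_apply (measurable_fst hA),
          Set.prod_eq]
    _ = ν.map Prod.fst A * ν.map Prod.snd B := by
        rw [hcond, Measure.smul_apply, smul_eq_mul, Measure.map_apply measurable_snd hB, mul_comm]

theorem extremal_Z2_invariant_measure_is_product_general {X Y : Type*}
    [TopologicalSpace X]
    [MeasurableSpace X] [BorelSpace X]
    [TopologicalSpace Y]
    [MeasurableSpace Y] [BorelSpace Y]
    (S : X ≃ₜ X) (T : Y ≃ₜ Y)
    (ν : Measure (X × Y)) (hν : IsProbabilityMeasure ν)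
    (hS : ν.map (fun p : X × Y => (S p.1, p.2)) = ν)
    (hT : ν.map (fun p : X × Y => (p.1, T p.2)) = ν)
    (hext : ExtremalInvariant2 (fun p : X × Y => (S p.1, p.2))
      (fun p : X × Y => (p.1, T p.2)) ν) :
    ∃ (μ₁ : Measure X) (μ₂ : Measure Y),
      IsProbabilityMeasure μ₁ ∧ IsProbabilityMeasure μ₂ ∧
      μ₁.map ⇑S = μ₁ ∧ μ₂.map ⇑T = μ₂ ∧
      ExtremalInvariant (⇑S) μ₁ ∧ ExtremalInvariant (⇑T) μ₂ ∧
      ν = μ₁.prod μ₂ := by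
  have hΦ : Measurable fun p : X × Y => (S p.1, p.2) := by fun_prop
  have hΨ : Measurable fun p : X × Y => (p.1, T p.2) := by fun_prop
  have hext₁ : ExtremalInvariant S (ν.map Prod.fst) :=
    hext.extremalInvariant_map hΦ hΨ hS hT measurable_fst S.toMeasurableEquiv
      (fun _ => rfl) (fun _ => rfl)
  have hext₂ : ExtremalInvariant T (ν.map Prod.snd) :=
    hext.swap.extremalInvariant_map hΨ hΦ hT hS measurable_snd T.toMeasurableEquiv
      (fun _ => rfl) (fun _ => rfl)
  exact ⟨ν.map Prod.fst, ν.map Prod.snd,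
    Measure.isProbabilityMeasure_map measurable_fst.aemeasurable,
    Measure.isProbabilityMeasure_map measurable_snd.aemeasurable,
    map_map_eq_of_semiconj hΦ measurable_fst S.measurable hS (fun _ => rfl),
    map_map_eq_of_semiconj hΨ measurable_snd T.measurable hT (fun _ => rfl),
    hext₁, hext₂, eq_prod_of_extremalInvariant_map_fst S.measurable hS hext₁⟩

theorem extremal_Z2_invariant_measure_is_product {X Y : Type*}
    [TopologicalSpace X] [CompactSpace X] [TopologicalSpace.MetrizableSpace X] [TotallyDisconnectedSpace X]
    [MeasurableSpace X] [BorelSpace X]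
    [TopologicalSpace Y] [CompactSpace Y] [TopologicalSpace.MetrizableSpace Y] [TotallyDisconnectedSpace Y]
    [MeasurableSpace Y] [BorelSpace Y]
    (S : X ≃ₜ X) (T : Y ≃ₜ Y)
    (ν : Measure (X × Y)) (hν : IsProbabilityMeasure ν)
    (hS : ν.map (fun p : X × Y => (S p.1, p.2)) = ν)
    (hT : ν.map (fun p : X × Y => (p.1, T p.2)) = ν)
    (hext : ExtremalInvariant2 (fun p : X × Y => (S p.1, p.2))
      (fun p : X × Y => (p.1, T p.2)) ν) :
    ∃ (μ₁ : Measure X) (μ₂ : Measure Y),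
      IsProbabilityMeasure μ₁ ∧ IsProbabilityMeasure μ₂ ∧
      μ₁.map ⇑S = μ₁ ∧ μ₂.map ⇑T = μ₂ ∧
      ExtremalInvariant (⇑S) μ₁ ∧ ExtremalInvariant (⇑T) μ₂ ∧
      ν = μ₁.prod μ₂ :=
  extremal_Z2_invariant_measure_is_product_general S T ν hν hS hT hext

end Paper
end

section
/- Let K be a Choquet simplex, Z = K ∩ 𝓛 for a closed flat 𝓛, and suppose there exist a closed face F of K with more than one extreme point satisfying F ∩ Z = ∅, and a point v ∈ K \ Z from which two distinct line segments to points x₁, x₂ of F both pass through Z. Then Z is not good as a set of states on Aff K with the strict ordering: there exist strictly positive a, b ∈ Aff K with a|Z ≪ b|Z (uniformly) but no c ∈ Aff K with 0 ≤ c ≤ b and c|Z = a|Z. -/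
/-!
Write `zᵢ = lᵢ xᵢ + (1 - lᵢ) v`. For any affine `c ≥ 0` on `K`, the two segments give
`c z₂ (1 - l₁) ≤ c z₁ (1 - l₂) + l₂ (1 - l₁) c x₂`. So it suffices to find a positive affine `a`
with `a z₁ (1 - l₂) < a z₂ (1 - l₁)` (after possibly swapping the indices) and a positive affine
`b` that is large on `Z` but arbitrarily small on the face `F` containing `x₂`: then any `c` with
`0 ≤ c ≤ b` and `c = a` on `Z` violates the inequality. Such a `b` comes from separating `F` from
the compact convex set `(1 - t) K + t Z`, which misses `F` because `F` is a face disjoint from `Z`.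
If `l₁ ≠ l₂` a constant `a` works; if `l₁ = l₂`, `a` must separate `x₁` from `x₂`, which is
possible because a closed set with an extreme point forces the topology to be `T₀`.
-/

namespace Paper

/-- The cone over `K × {1}` in `E × ℝ` (including the apex `0`). -/
def SimplexCone {E : Type*} [AddCommGroup E] [Module ℝ E] (K : Set E) : Set (E × ℝ) :=
  {p | ∃ (t : ℝ) (x : E), 0 ≤ t ∧ x ∈ K ∧ p = (t • x, t)}

/-- `K` is a Choquet simplex: compact, convex, and the ordering of `E × ℝ`
determined by the cone over `K` is a lattice ordering. -/
def IsChoquetSimplex {E : Type*} [AddCommGroup E] [Module ℝ E] [TopologicalSpace E]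
    (K : Set E) : Prop :=
  IsCompact K ∧ Convex ℝ K ∧
  ∀ a b : E × ℝ, ∃ c : E × ℝ, c - a ∈ SimplexCone K ∧ c - b ∈ SimplexCone K ∧
    ∀ d : E × ℝ, d - a ∈ SimplexCone K → d - b ∈ SimplexCone K → d - c ∈ SimplexCone K

/-- A continuous affine real-valued function on `K` (an element of `Aff K`). -/
def AffContOn {E : Type*} [AddCommGroup E] [Module ℝ E] [TopologicalSpace E]
    (f : E → ℝ) (K : Set E) : Prop :=
  ContinuousOn f K ∧ ∀ x ∈ K, ∀ y ∈ K, ∀ t : ℝ, 0 ≤ t → t ≤ 1 →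
    f (t • x + (1 - t) • y) = t * f x + (1 - t) * f y

section

open scoped Pointwise

variable {E : Type*} [AddCommGroup E] [Module ℝ E]

theorem _root_.isExtreme_of_forall_combo_mem {K F : Set E} (hFK : F ⊆ K)
    (hface : ∀ x ∈ K, ∀ y ∈ K, ∀ t : ℝ, 0 < t → t < 1 →
      t • x + (1 - t) • y ∈ F → x ∈ F ∧ y ∈ F) :
    IsExtreme ℝ K F := by
  refine ⟨hFK, fun x hx y hy z hz ⟨s, t, hs, ht, hst, hsz⟩ => ?_⟩
  obtain rfl : t = 1 - s := by linarith
  exact (hface x hx y hy s hs (by linarith) (hsz ▸ hz)).1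

theorem _root_.IsExtreme.disjoint_smul_add_smul {K F Z : Set E} (hF : IsExtreme ℝ K F)
    (hZK : Z ⊆ K) (hFZ : Disjoint F Z) {t : ℝ} (ht₀ : 0 < t) (ht₁ : t < 1) :
    Disjoint ((1 - t) • K + t • Z) F := by
  refine Set.disjoint_right.2 fun p hpF hpS => ?_
  obtain ⟨_, ⟨k, hk, rfl⟩, _, ⟨z, hz, rfl⟩, rfl⟩ := hpS
  have hseg : (1 - t) • k + t • z ∈ openSegment ℝ k z :=
    ⟨1 - t, t, by linarith, ht₀, by ring, rfl⟩
  exact Set.disjoint_left.1 hFZ (hF.right_mem_of_mem_openSegment hk (hZK hz) hpF hseg) hz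

variable [TopologicalSpace E]

theorem affContOn_const (q : ℝ) (K : Set E) : AffContOn (fun _ => q) K :=
  ⟨continuousOn_const, fun _ _ _ _ _ _ _ => by ring⟩

theorem AffContOn.const_mul {f : E → ℝ} {K : Set E} (hf : AffContOn f K) (p : ℝ) :
    AffContOn (fun x => p * f x) K :=
  ⟨continuousOn_const.mul hf.1, fun x hx y hy t ht₀ ht₁ => by
    simp only [hf.2 x hx y hy t ht₀ ht₁]; ring⟩

theorem StrongDual.affContOn_add_const (g : StrongDual ℝ E) (q : ℝ) (K : Set E) :
    AffContOn (fun x => g x + q) K :=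
  ⟨by fun_prop, fun _ _ _ _ _ _ _ => by simp only [map_add, map_smul, smul_eq_mul]; ring⟩

theorem AffContOn.mul_le_of_segments {c : E → ℝ} {K : Set E} (hc : AffContOn c K)
    {v x₁ x₂ : E} (hv : v ∈ K) (hx₁ : x₁ ∈ K) (hx₂ : x₂ ∈ K) {l₁ l₂ : ℝ}
    (hl₁ : l₁ ∈ Set.Icc (0 : ℝ) 1) (hl₂ : l₂ ∈ Set.Icc (0 : ℝ) 1) (hcx₁ : 0 ≤ c x₁) :
    c (l₂ • x₂ + (1 - l₂) • v) * (1 - l₁) ≤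
      c (l₁ • x₁ + (1 - l₁) • v) * (1 - l₂) + l₂ * (1 - l₁) * c x₂ := by
  rw [hc.2 x₁ hx₁ v hv l₁ hl₁.1 hl₁.2, hc.2 x₂ hx₂ v hv l₂ hl₂.1 hl₂.2]
  nlinarith [mul_nonneg (mul_nonneg hl₁.1 hcx₁) (sub_nonneg.2 hl₂.2)]

theorem exists_pos_affContOn_ne {K : Set E} (hK : IsCompact K) {g : StrongDual ℝ E}
    {x₁ x₂ : E} (hg : g x₁ ≠ g x₂) (v : E) {l₁ : ℝ} (hl₁ : l₁ ∈ Set.Ioo (0 : ℝ) 1) (l₂ : ℝ) :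
    ∃ a : E → ℝ, AffContOn a K ∧ (∀ x ∈ K, 0 < a x) ∧
      a (l₁ • x₁ + (1 - l₁) • v) * (1 - l₂) ≠ a (l₂ • x₂ + (1 - l₂) • v) * (1 - l₁) := by
  rcases eq_or_ne l₁ l₂ with rfl | hl
  · obtain ⟨m, hm⟩ := hK.bddBelow_image g.continuous.continuousOn
    refine ⟨fun x => g x + (1 - m), StrongDual.affContOn_add_const g _ K,
      fun x hx => by linarith [hm (Set.mem_image_of_mem g hx)], fun h => hg ?_⟩
    have h' := mul_right_cancel₀ (sub_ne_zero.2 hl₁.2.ne') h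
    simp only [map_add, map_smul, smul_eq_mul, add_left_inj] at h'
    exact mul_left_cancel₀ hl₁.1.ne' (by linarith)
  · exact ⟨fun _ => 1, affContOn_const 1 K, fun _ _ => one_pos, by
      simpa [sub_eq_sub_iff_sub_eq_sub] using hl.symm⟩

variable [IsTopologicalAddGroup E]

theorem _root_.t0Space_of_mem_extremePoints {F : Set E} (hF : IsClosed F) {e : E}
    (he : e ∈ F.extremePoints ℝ) : T0Space E := by
  refine (t0Space_iff_inseparable E).2 fun x y hxy => ?_
  have hw : Inseparable (x - y) 0 := by simpa [sub_eq_add_neg] using hxy.add (.refl (-y))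
  have hmem : ∀ w : E, Inseparable w 0 → e + w ∈ F := fun w hw =>
    (((Inseparable.refl e).add hw).mem_closed_iff hF).2 (by simpa using he.1)
  have hseg : e ∈ openSegment ℝ (e + (x - y)) (e + -(x - y)) :=
    ⟨1 / 2, 1 / 2, by norm_num, by norm_num, by norm_num, by module⟩
  have hleft := he.2 (hmem _ hw) (hmem _ (by simpa using hw.neg)) hseg
  exact sub_eq_zero.1 (add_eq_left.1 hleft)

variable [ContinuousSMul ℝ E] [LocallyConvexSpace ℝ E]

theorem _root_.IsExtreme.exists_affContOn_separating {K F Z : Set E} (hKc : IsCompact K)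
    (hKcv : Convex ℝ K) (hZc : IsCompact Z) (hZcv : Convex ℝ Z) (hZK : Z ⊆ K)
    (hZne : Z.Nonempty) (hF : IsExtreme ℝ K F) (hFcl : IsClosed F) (hFcv : Convex ℝ F)
    (hFZ : Disjoint F Z) {ε : ℝ} (hε : 0 < ε) :
    ∃ ψ : E → ℝ, AffContOn ψ K ∧ (∀ x ∈ K, 0 < ψ x) ∧ (∀ z ∈ Z, 1 ≤ ψ z) ∧
      ∀ x ∈ F, ψ x < ε := by
  set t := ε / (1 + ε)
  have ht₀ : 0 < t := by positivity
  have ht₁ : t < 1 := (div_lt_one (by linarith)).2 (by linarith)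
  have htε : t ≤ ε := div_le_self hε.le (by linarith)
  obtain ⟨g, u, w, hgS, huw, hgF⟩ := geometric_hahn_banach_compact_closed
    ((hKcv.smul _).add (hZcv.smul _)) ((hKc.smul _).add (hZc.smul _)) hFcv hFcl
    (hF.disjoint_smul_add_smul hZK hFZ ht₀ ht₁)
  have hS : ∀ k ∈ K, ∀ z ∈ Z, (1 - t) * g k + t * g z < u := fun k hk z hz => by
    simpa using hgS _ (Set.add_mem_add (Set.smul_mem_smul_set hk) (Set.smul_mem_smul_set hz))
  obtain ⟨z₀, hz₀, hmax⟩ := hZc.exists_isMaxOn hZne g.continuous.continuousOn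
  set d := u - g z₀
  have hd : 0 < d := by linarith [hS z₀ (hZK hz₀) z₀ hz₀]
  refine ⟨fun x => (1 - t) * ((u - g x) / d) + t,
    ⟨by fun_prop, fun _ _ _ _ _ _ _ => by simp only [map_add, map_smul, smul_eq_mul]; ring⟩,
    fun k hk => ?_, fun z hz => ?_, fun x hx => ?_⟩
  · have : 0 < (1 - t) * (u - g k) + t * d := by linarith [hS k hk z₀ hz₀]
    calc (0 : ℝ) < ((1 - t) * (u - g k) + t * d) / d := div_pos this hd
      _ = _ := by field_simp
  · have : 1 ≤ (u - g z) / d := (one_le_div hd).2 (by linarith [isMaxOn_iff.1 hmax z hz])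
    nlinarith
  · have : (u - g x) / d < 0 := div_neg_of_neg_of_pos (by linarith [hgF x hx]) hd
    nlinarith

theorem not_good_of_gap {K F Z : Set E} (hKc : IsCompact K) (hKcv : Convex ℝ K)
    (hZc : IsCompact Z) (hZcv : Convex ℝ Z) (hZK : Z ⊆ K) (hF : IsExtreme ℝ K F)
    (hFcl : IsClosed F) (hFcv : Convex ℝ F) (hFZ : Disjoint F Z) {v x₁ x₂ z₁ z₂ : E}
    (hv : v ∈ K) (hx₁ : x₁ ∈ K) (hx₂ : x₂ ∈ F) (hz₁ : z₁ ∈ Z) (hz₂ : z₂ ∈ Z) {l₁ l₂ : ℝ}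
    (hl₁ : l₁ ∈ Set.Ioo (0 : ℝ) 1) (hl₂ : l₂ ∈ Set.Ioo (0 : ℝ) 1)
    (hseg₁ : z₁ = l₁ • x₁ + (1 - l₁) • v) (hseg₂ : z₂ = l₂ • x₂ + (1 - l₂) • v)
    {a : E → ℝ} (ha : AffContOn a K) (hapos : ∀ x ∈ K, 0 < a x)
    (hgap : a z₁ * (1 - l₂) < a z₂ * (1 - l₁)) :
    ∃ a b : E → ℝ, AffContOn a K ∧ AffContOn b K ∧
      (∀ x ∈ K, 0 < a x) ∧ (∀ x ∈ K, 0 < b x) ∧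
      (∃ δ : ℝ, 0 < δ ∧ ∀ z ∈ Z, a z + δ ≤ b z) ∧
      ¬ ∃ c : E → ℝ, AffContOn c K ∧ (∀ x ∈ K, 0 ≤ c x ∧ c x ≤ b x) ∧
          ∀ z ∈ Z, c z = a z := by
  obtain ⟨N, hN⟩ := hZc.bddAbove_image (ha.1.mono hZK)
  have hN₁ : 0 < N + 1 := by linarith [hN (Set.mem_image_of_mem a hz₁), hapos z₁ (hZK hz₁)]
  set G := a z₂ * (1 - l₁) - a z₁ * (1 - l₂)
  obtain ⟨ψ, hψ, hψpos, hψZ, hψF⟩ := hF.exists_affContOn_separating hKc hKcv hZc hZcv hZK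
    ⟨z₁, hz₁⟩ hFcl hFcv hFZ (div_pos (sub_pos.2 hgap) hN₁)
  refine ⟨a, fun x => (N + 1) * ψ x, ha, hψ.const_mul _, hapos,
    fun x hx => mul_pos hN₁ (hψpos x hx), ⟨1, one_pos, fun z hz => ?_⟩, ?_⟩
  · nlinarith [hN (Set.mem_image_of_mem a hz), hψZ z hz]
  rintro ⟨c, hc, hcb, hcZ⟩
  have hx₂K := hF.subset hx₂
  have key := hc.mul_le_of_segments hv hx₁ hx₂K (Set.Ioo_subset_Icc_self hl₁)
    (Set.Ioo_subset_Icc_self hl₂) (hcb x₁ hx₁).1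
  rw [← hseg₁, ← hseg₂, hcZ z₁ hz₁, hcZ z₂ hz₂] at key
  have hcx₂ : c x₂ < G := calc
    c x₂ ≤ (N + 1) * ψ x₂ := (hcb x₂ hx₂K).2
    _ < (N + 1) * (G / (N + 1)) := mul_lt_mul_of_pos_left (hψF x₂ hx₂) hN₁
    _ = G := mul_div_cancel₀ _ hN₁.ne'
  have : l₂ * (1 - l₁) * c x₂ ≤ c x₂ :=
    mul_le_of_le_one_left (hcb x₂ hx₂K).1 (by nlinarith [hl₁.1, hl₁.2, hl₂.1, hl₂.2])
  linarith

end

theorem flat_section_not_good {E : Type*} [AddCommGroup E] [Module ℝ E]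
    [TopologicalSpace E] [IsTopologicalAddGroup E] [ContinuousSMul ℝ E]
    [LocallyConvexSpace ℝ E]
    (K : Set E) (hK : IsChoquetSimplex K)
    (L : AffineSubspace ℝ E) (hLcl : IsClosed (L : Set E))
    (Z : Set E) (hZ : Z = K ∩ (L : Set E))
    -- F is a closed face of K with more than one extreme point, disjoint from Z
    (F : Set E) (hFK : F ⊆ K) (hFcl : IsClosed F) (hFconv : Convex ℝ F)
    (hFface : ∀ x ∈ K, ∀ y ∈ K, ∀ t : ℝ, 0 < t → t < 1 →
      t • x + (1 - t) • y ∈ F → x ∈ F ∧ y ∈ F)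
    (hFext : (Set.extremePoints ℝ F).Nontrivial)
    (hFZ : F ∩ Z = ∅)
    -- v ∈ K \ Z, with two distinct segments from v to F passing through Z
    (v : E) (hv : v ∈ K \ Z)
    (x₁ x₂ : E) (hx₁ : x₁ ∈ F) (hx₂ : x₂ ∈ F) (hx12 : x₁ ≠ x₂)
    (z₁ z₂ : E) (hz₁ : z₁ ∈ Z) (hz₂ : z₂ ∈ Z)
    (l₁ l₂ : ℝ) (hl₁ : l₁ ∈ Set.Ioo (0:ℝ) 1) (hl₂ : l₂ ∈ Set.Ioo (0:ℝ) 1)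
    (hseg₁ : z₁ = l₁ • x₁ + (1 - l₁) • v) (hseg₂ : z₂ = l₂ • x₂ + (1 - l₂) • v) :
    -- Z is not good for Aff K with the strict ordering
    ∃ a b : E → ℝ, AffContOn a K ∧ AffContOn b K ∧
      (∀ x ∈ K, 0 < a x) ∧ (∀ x ∈ K, 0 < b x) ∧
      (∃ δ : ℝ, 0 < δ ∧ ∀ z ∈ Z, a z + δ ≤ b z) ∧
      ¬ ∃ c : E → ℝ, AffContOn c K ∧ (∀ x ∈ K, 0 ≤ c x ∧ c x ≤ b x) ∧
          ∀ z ∈ Z, c z = a z := by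
  obtain ⟨hKc, hKcv, -⟩ := hK
  have hZK : Z ⊆ K := hZ ▸ Set.inter_subset_left
  have hZcv : Convex ℝ Z := hZ ▸ hKcv.inter L.convex
  have hZc : IsCompact Z := hZ ▸ hKc.inter_right hLcl
  have hF : IsExtreme ℝ K F := isExtreme_of_forall_combo_mem hFK hFface
  have hFZ' : Disjoint F Z := Set.disjoint_iff_inter_eq_empty.2 hFZ
  have : T0Space E := t0Space_of_mem_extremePoints hFcl hFext.nonempty.some_mem
  obtain ⟨g, hg⟩ := geometric_hahn_banach_point_point hx12
  obtain ⟨a, ha, hapos, hne⟩ := exists_pos_affContOn_ne hKc hg.ne v hl₁ l₂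
  rw [← hseg₁, ← hseg₂] at hne
  rcases hne.lt_or_gt with hgap | hgap
  · exact not_good_of_gap hKc hKcv hZc hZcv hZK hF hFcl hFconv hFZ' hv.1 (hFK hx₁) hx₂
      hz₁ hz₂ hl₁ hl₂ hseg₁ hseg₂ ha hapos hgap
  · exact not_good_of_gap hKc hKcv hZc hZcv hZK hF hFcl hFconv hFZ' hv.1 (hFK hx₂) hx₁
      hz₂ hz₁ hl₂ hl₁ hseg₂ hseg₁ ha hapos hgap

end Paper
end
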